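/- arXiv:2205.03150 — 7 statements merged into one kernel-verified Lean document; each statement's English description precedes it below -/
import Mathlib

section
/- Let d ≥ 1 be an integer, γ > 0, and I ≥ 2 real. Then the sum over all d-tuples of positive integers j with product exceeding I of ∏_{i=1}^d j_i^{-γ-1} is bounded above by a constant (depending only on d and γ) times I^{-γ} (log I)^{d-1}. -/
/-!
Let `T_d(I)` be the tail sum, computed in `ℝ≥0∞` over all of `ℕ^d` (a zero coordinate has weight
`0 ^ (-γ - 1) = 0`), so that Fubini needs no summability. Splitting off the first coordinate gives
`T_{d+1}(I) = ∑_m m^(-γ-1) T_d(I/m)`. For `m ≤ I` the bound `T_d(x) ≤ C x^(-γ) (log x + 1)^(d-1)`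
contributes `C I^(-γ) (log I + 1)^(d-1) / m`, and the harmonic sum up to `I` costs one more factor
`log I + 1`. For `m > I` we bound `T_d` by the full sum `ζ(γ + 1)^d` and use
`∑_{m > I} m^(-γ-1) ≤ (2^γ / γ) I^(-γ)`, which telescopes by convexity of `t ↦ t^(-γ)`.
-/

open Real
open scoped ENNReal

namespace TailProdSum

lemma mul_rpow_neg_sub_one_le_sub {γ t : ℝ} (hγ : 0 ≤ γ) (ht : 0 < t) :
    γ * (t + 1) ^ (-γ - 1) ≤ t ^ (-γ) - (t + 1) ^ (-γ) := by
  have ht1 : 0 < t + 1 := by linarith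
  have hlog : (t + 1)⁻¹ ≤ log ((t + 1) / t) := by
    have h := one_sub_inv_le_log_of_pos (div_pos ht1 ht)
    have h1 : 1 - ((t + 1) / t)⁻¹ = (t + 1)⁻¹ := by field_simp; ring
    rwa [h1] at h
  have hbernoulli : 1 + γ * (t + 1)⁻¹ ≤ ((t + 1) / t) ^ γ := by
    rw [rpow_def_of_pos (div_pos ht1 ht)]
    nlinarith [add_one_le_exp (log ((t + 1) / t) * γ)]
  have hsplit : t ^ (-γ) = (t + 1) ^ (-γ) * ((t + 1) / t) ^ γ := by
    rw [div_rpow ht1.le ht.le, rpow_neg ht1.le, rpow_neg ht.le]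
    field_simp
  have hpos : 0 < (t + 1) ^ (-γ) := rpow_pos_of_pos ht1 _
  rw [rpow_sub_one ht1.ne', hsplit, div_eq_mul_inv]
  linarith [mul_le_mul_of_nonneg_left hbernoulli hpos.le]

lemma div_two_rpow_neg {x : ℝ} (hx : 0 ≤ x) (γ : ℝ) : (x / 2) ^ (-γ) = 2 ^ γ * x ^ (-γ) := by
  rw [div_rpow hx zero_le_two, rpow_neg zero_le_two, div_inv_eq_mul, mul_comm]

lemma rpow_neg_sub_one_mul_div_rpow_neg {m I : ℝ} (hm : 0 < m) (hI : 0 ≤ I) (γ : ℝ) :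
    m ^ (-γ - 1) * (I / m) ^ (-γ) = I ^ (-γ) * m⁻¹ := by
  rw [rpow_sub_one hm.ne', div_rpow hI hm.le, rpow_neg hm.le, rpow_neg hI]
  have : 0 < m ^ γ := rpow_pos_of_pos hm γ
  field_simp

lemma rpow_neg_sub_one_mul_bound_le {γ C I m : ℝ} {k : ℕ} (hC : 0 ≤ C) (hm : 1 ≤ m)
    (hmI : m ≤ I) :
    m ^ (-γ - 1) * (C * (I / m) ^ (-γ) * (log (I / m) + 1) ^ k)
      ≤ C * I ^ (-γ) * (log I + 1) ^ k * m⁻¹ := by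
  have hm0 : 0 < m := by linarith
  have hI0 : 0 < I := by linarith
  have hlog : 0 ≤ log (I / m) := log_nonneg ((one_le_div hm0).2 hmI)
  have hlog_le : log (I / m) ≤ log I :=
    log_le_log (div_pos hI0 hm0) (div_le_self hI0.le hm)
  calc m ^ (-γ - 1) * (C * (I / m) ^ (-γ) * (log (I / m) + 1) ^ k)
      = C * (I ^ (-γ) * m⁻¹) * (log (I / m) + 1) ^ k := by
        rw [← rpow_neg_sub_one_mul_div_rpow_neg hm0 hI0.le γ]; ring
    _ ≤ C * (I ^ (-γ) * m⁻¹) * (log I + 1) ^ k := by gcongr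
    _ = C * I ^ (-γ) * (log I + 1) ^ k * m⁻¹ := by ring

lemma sum_Icc_floor_inv_le_log_add_one {I : ℝ} (hI : 1 ≤ I) :
    ∑ m ∈ Finset.Icc 1 ⌊I⌋₊, ((m : ℝ))⁻¹ ≤ log I + 1 := by
  have hharmonic := harmonic_le_one_add_log ⌊I⌋₊
  rw [harmonic_eq_sum_Icc] at hharmonic
  push_cast at hharmonic
  have hfloor : (0 : ℝ) < ⌊I⌋₊ := by exact_mod_cast Nat.floor_pos.2 hI
  linarith [log_le_log hfloor (Nat.floor_le (by linarith))]

lemma log_add_one_le_mul_log {I : ℝ} (hI : 2 ≤ I) : log I + 1 ≤ (1 + (log 2)⁻¹) * log I := by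
  have hlog2 : 0 < log 2 := log_pos one_lt_two
  have hle : log 2 ≤ log I := log_le_log two_pos hI
  have : 1 ≤ (log 2)⁻¹ * log I := by rw [inv_mul_eq_div, one_le_div hlog2]; exact hle
  linarith

lemma tsum_ite_lt_eq_tsum_add_floor {x : ℝ} (hx : 0 ≤ x) (f : ℕ → ℝ≥0∞) :
    ∑' m : ℕ, (if x < m then f m else 0) = ∑' k, f (k + (⌊x⌋₊ + 1)) := by
  rw [← ENNReal.summable.sum_add_tsum_nat_add', Finset.sum_eq_zero, zero_add]
  · refine tsum_congr fun k => if_pos ?_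
    push_cast
    linarith [Nat.lt_floor_add_one x, (k.cast_nonneg : (0 : ℝ) ≤ k)]
  · intro i hi
    have hi : (i : ℝ) ≤ ⌊x⌋₊ := Nat.cast_le.2 (Nat.lt_succ_iff.1 (Finset.mem_range.1 hi))
    exact if_neg (not_lt.2 (hi.trans (Nat.floor_le hx)))

noncomputable def weight (γ : ℝ) (n : ℕ) : ℝ≥0∞ := ENNReal.ofReal ((n : ℝ) ^ (-γ - 1))

lemma weight_zero {γ : ℝ} (hγ : 0 < γ) : weight γ 0 = 0 := by
  rw [weight, Nat.cast_zero, zero_rpow (by linarith), ENNReal.ofReal_zero]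

lemma tsum_weight {γ : ℝ} (hγ : 0 < γ) :
    ∑' n : ℕ, weight γ n = ENNReal.ofReal (∑' n : ℕ, (n : ℝ) ^ (-γ - 1)) :=
  (ENNReal.ofReal_tsum_of_nonneg (fun n => by positivity)
    (summable_nat_rpow.2 (by linarith))).symm

lemma tsum_weight_add_le {γ : ℝ} (hγ : 0 < γ) {n : ℕ} (hn : 0 < n) :
    ∑' k, weight γ (k + (n + 1)) ≤ ENNReal.ofReal (γ⁻¹ * (n : ℝ) ^ (-γ)) := by
  have hn : (0 : ℝ) < n := by exact_mod_cast hn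
  set b : ℕ → ℝ := fun k => ((k : ℝ) + n) ^ (-γ)
  have hb : ∀ k, b (k + 1) ≤ b k := fun k =>
    rpow_le_rpow_of_nonpos (by positivity) (by push_cast; linarith) (by linarith)
  have hterm : ∀ k : ℕ, weight γ (k + (n + 1)) ≤ ENNReal.ofReal (γ⁻¹ * (b k - b (k + 1))) := by
    intro k
    apply ENNReal.ofReal_le_ofReal
    have := mul_rpow_neg_sub_one_le_sub hγ.le (t := (k : ℝ) + n) (by positivity)
    rw [le_inv_mul_iff₀ hγ]
    simp only [b]
    push_cast
    rwa [← add_assoc, add_right_comm (k : ℝ) 1]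
  refine ENNReal.tsum_le_of_sum_range_le fun N => ?_
  calc ∑ k ∈ Finset.range N, weight γ (k + (n + 1))
      ≤ ∑ k ∈ Finset.range N, ENNReal.ofReal (γ⁻¹ * (b k - b (k + 1))) :=
        Finset.sum_le_sum fun k _ => hterm k
    _ = ENNReal.ofReal (γ⁻¹ * (b 0 - b N)) := by
        rw [← ENNReal.ofReal_sum_of_nonneg, ← Finset.mul_sum, Finset.sum_range_sub']
        exact fun k _ => mul_nonneg (inv_nonneg.2 hγ.le) (sub_nonneg.2 (hb k))
    _ ≤ ENNReal.ofReal (γ⁻¹ * (n : ℝ) ^ (-γ)) := by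
        refine ENNReal.ofReal_le_ofReal (mul_le_mul_of_nonneg_left ?_ (inv_pos.2 hγ).le)
        simp only [b, Nat.cast_zero, zero_add, sub_le_self_iff]
        positivity

lemma tsum_weight_tail_le {γ x : ℝ} (hγ : 0 < γ) (hx : 1 ≤ x) :
    ∑' m : ℕ, (if x < m then weight γ m else 0) ≤ ENNReal.ofReal (2 ^ γ / γ * x ^ (-γ)) := by
  have hn : 0 < ⌊x⌋₊ := Nat.floor_pos.2 hx
  have hx2n : x / 2 ≤ ⌊x⌋₊ := by
    linarith [Nat.lt_floor_add_one x, (Nat.one_le_cast.2 hn : (1 : ℝ) ≤ ⌊x⌋₊)]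
  rw [tsum_ite_lt_eq_tsum_add_floor (by linarith)]
  refine (tsum_weight_add_le hγ hn).trans (ENNReal.ofReal_le_ofReal ?_)
  calc γ⁻¹ * (⌊x⌋₊ : ℝ) ^ (-γ) ≤ γ⁻¹ * (x / 2) ^ (-γ) := by
        gcongr ?_ * ?_
        exact rpow_le_rpow_of_nonpos (by linarith) hx2n (by linarith)
    _ = 2 ^ γ / γ * x ^ (-γ) := by rw [div_two_rpow_neg (by linarith)]; ring

noncomputable def tailSum (γ : ℝ) (d : ℕ) (I : ℝ) : ℝ≥0∞ :=
  ∑' j : Fin d → ℕ, if I < ∏ i, (j i : ℝ) then ∏ i, weight γ (j i) else 0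

lemma tailSum_zero (γ I : ℝ) : tailSum γ 0 I = if I < 1 then 1 else 0 := by
  simp [tailSum]

lemma tailSum_succ {γ : ℝ} (hγ : 0 < γ) (d : ℕ) (I : ℝ) :
    tailSum γ (d + 1) I = ∑' m : ℕ, weight γ m * tailSum γ d (I / m) := by
  rw [tailSum, ← (Fin.consEquiv fun _ => ℕ).tsum_eq, ENNReal.tsum_prod']
  refine tsum_congr fun m => ?_
  rcases Nat.eq_zero_or_pos m with rfl | hm
  · simp [weight_zero hγ, Fin.prod_univ_succ]
  · have hm0 : (0 : ℝ) < m := by exact_mod_cast hm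
    simp only [Fin.consEquiv_apply, Fin.prod_univ_succ, Fin.cons_zero, Fin.cons_succ]
    rw [tailSum, ← ENNReal.tsum_mul_left]
    refine tsum_congr fun j => ?_
    rw [mul_ite, mul_zero]
    simp only [div_lt_iff₀ hm0, mul_comm (m : ℝ)]

lemma tailSum_le_pow {γ : ℝ} (hγ : 0 < γ) (d : ℕ) (I : ℝ) :
    tailSum γ d I ≤ ENNReal.ofReal ((∑' n : ℕ, (n : ℝ) ^ (-γ - 1)) ^ d) := by
  induction d generalizing I with
  | zero =>
    rw [tailSum_zero, pow_zero, ENNReal.ofReal_one]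
    split_ifs <;> simp
  | succ d ih =>
    have hZ : 0 ≤ ∑' n : ℕ, (n : ℝ) ^ (-γ - 1) := tsum_nonneg fun n => by positivity
    calc tailSum γ (d + 1) I
        ≤ ∑' m : ℕ, weight γ m * ENNReal.ofReal ((∑' n : ℕ, (n : ℝ) ^ (-γ - 1)) ^ d) := by
          rw [tailSum_succ hγ]
          exact ENNReal.tsum_le_tsum fun m => mul_le_mul_right (ih _) _
      _ = ENNReal.ofReal ((∑' n : ℕ, (n : ℝ) ^ (-γ - 1)) ^ (d + 1)) := by
          rw [ENNReal.tsum_mul_right, tsum_weight hγ, ← ENNReal.ofReal_mul hZ, pow_succ']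

lemma weight_mul_tailSum_div_le {γ C I : ℝ} {d k : ℕ} (hγ : 0 < γ) (hC : 0 ≤ C) (hI : 0 ≤ I)
    (hT : ∀ x, 1 ≤ x → tailSum γ d x ≤ ENNReal.ofReal (C * x ^ (-γ) * (log x + 1) ^ k))
    (m : ℕ) :
    weight γ m * tailSum γ d (I / m) ≤
      (if m ∈ Finset.Icc 1 ⌊I⌋₊ then
        ENNReal.ofReal (C * I ^ (-γ) * (log I + 1) ^ k * (m : ℝ)⁻¹) else 0)
      + (if I < m then weight γ m else 0)
        * ENNReal.ofReal ((∑' n : ℕ, (n : ℝ) ^ (-γ - 1)) ^ d) := by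
  rcases Nat.eq_zero_or_pos m with rfl | hm
  · simp [weight_zero hγ]
  have hm1 : (1 : ℝ) ≤ m := by exact_mod_cast hm
  by_cases hmI : (m : ℝ) ≤ I
  · have hmem : m ∈ Finset.Icc 1 ⌊I⌋₊ := Finset.mem_Icc.2 ⟨hm, Nat.le_floor hmI⟩
    rw [if_pos hmem, if_neg hmI.not_gt, zero_mul, add_zero, weight]
    calc ENNReal.ofReal ((m : ℝ) ^ (-γ - 1)) * tailSum γ d (I / m)
        ≤ ENNReal.ofReal ((m : ℝ) ^ (-γ - 1))
            * ENNReal.ofReal (C * (I / m) ^ (-γ) * (log (I / m) + 1) ^ k) :=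
          mul_le_mul_right (hT _ ((one_le_div (by linarith)).2 hmI)) _
      _ ≤ ENNReal.ofReal (C * I ^ (-γ) * (log I + 1) ^ k * (m : ℝ)⁻¹) := by
          rw [← ENNReal.ofReal_mul (by positivity)]
          exact ENNReal.ofReal_le_ofReal (rpow_neg_sub_one_mul_bound_le hC hm1 hmI)
  · have hmem : m ∉ Finset.Icc 1 ⌊I⌋₊ := fun h =>
      hmI ((Nat.le_floor_iff hI).1 (Finset.mem_Icc.1 h).2)
    rw [if_neg hmem, if_pos (not_le.1 hmI), zero_add]
    exact mul_le_mul_right (tailSum_le_pow hγ d _) _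

lemma tailSum_succ_le {γ C I : ℝ} {d k : ℕ} (hγ : 0 < γ) (hC : 0 ≤ C) (hI : 1 ≤ I)
    (hT : ∀ x, 1 ≤ x → tailSum γ d x ≤ ENNReal.ofReal (C * x ^ (-γ) * (log x + 1) ^ k)) :
    tailSum γ (d + 1) I ≤ ENNReal.ofReal (C * I ^ (-γ) * (log I + 1) ^ (k + 1)
      + 2 ^ γ / γ * I ^ (-γ) * (∑' n : ℕ, (n : ℝ) ^ (-γ - 1)) ^ d) := by
  set K := C * I ^ (-γ) * (log I + 1) ^ k
  set Z := ∑' n : ℕ, (n : ℝ) ^ (-γ - 1)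
  have hK : 0 ≤ K := by have := log_nonneg hI; positivity
  have hZ : 0 ≤ Z := tsum_nonneg fun n => by positivity
  rw [tailSum_succ hγ]
  calc ∑' m : ℕ, weight γ m * tailSum γ d (I / m)
      ≤ ∑ m ∈ Finset.Icc 1 ⌊I⌋₊, ENNReal.ofReal (K * (m : ℝ)⁻¹)
        + (∑' m : ℕ, if I < m then weight γ m else 0) * ENNReal.ofReal (Z ^ d) := by
        refine (ENNReal.tsum_le_tsum
          (weight_mul_tailSum_div_le hγ hC (by linarith) hT)).trans_eq ?_
        rw [ENNReal.tsum_add, ENNReal.tsum_mul_right, tsum_eq_sum fun m hm => if_neg hm,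
          Finset.sum_congr rfl fun m hm => if_pos hm]
    _ ≤ ENNReal.ofReal (K * (log I + 1))
          + ENNReal.ofReal (2 ^ γ / γ * I ^ (-γ)) * ENNReal.ofReal (Z ^ d) := by
        gcongr
        · rw [← ENNReal.ofReal_sum_of_nonneg fun m _ => by positivity, ← Finset.mul_sum]
          exact ENNReal.ofReal_le_ofReal
            (mul_le_mul_of_nonneg_left (sum_Icc_floor_inv_le_log_add_one hI) hK)
        · exact tsum_weight_tail_le hγ hI
    _ = _ := by
        rw [← ENNReal.ofReal_mul (by positivity),
          ← ENNReal.ofReal_add (mul_nonneg hK (by linarith [log_nonneg hI])) (by positivity)]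
        simp only [K]
        ring_nf

lemma exists_tailSum_succ_le {γ : ℝ} (hγ : 0 < γ) (d : ℕ) :
    ∃ C > 0, ∀ I, 1 ≤ I →
      tailSum γ (d + 1) I ≤ ENNReal.ofReal (C * I ^ (-γ) * (log I + 1) ^ d) := by
  induction d with
  | zero =>
    refine ⟨2 ^ γ / γ, by positivity, fun I hI => ?_⟩
    have h := tailSum_succ_le (C := 0) (k := 0) (d := 0) hγ le_rfl hI fun x hx => by
      rw [tailSum_zero, if_neg (not_lt.2 hx)]
      exact zero_le
    simpa using h
  | succ d ih =>
    obtain ⟨C, hC, hT⟩ := ih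
    set Z := ∑' n : ℕ, (n : ℝ) ^ (-γ - 1)
    have hZ : 0 ≤ Z := tsum_nonneg fun n => by positivity
    refine ⟨C + 2 ^ γ / γ * Z ^ (d + 1), by positivity, fun I hI => ?_⟩
    refine (tailSum_succ_le hγ hC.le hI hT).trans (ENNReal.ofReal_le_ofReal ?_)
    have hL : 1 ≤ (log I + 1) ^ (d + 1) := one_le_pow₀ (by linarith [log_nonneg hI])
    calc C * I ^ (-γ) * (log I + 1) ^ (d + 1) + 2 ^ γ / γ * I ^ (-γ) * Z ^ (d + 1)
        ≤ C * I ^ (-γ) * (log I + 1) ^ (d + 1)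
          + 2 ^ γ / γ * I ^ (-γ) * Z ^ (d + 1) * (log I + 1) ^ (d + 1) :=
          add_le_add_right (le_mul_of_one_le_right (by positivity) hL) _
      _ = (C + 2 ^ γ / γ * Z ^ (d + 1)) * I ^ (-γ) * (log I + 1) ^ (d + 1) := by ring

lemma tsum_subtype_le_of_tailSum_le {γ I R : ℝ} {d : ℕ} (hR : 0 ≤ R)
    (h : tailSum γ d I ≤ ENNReal.ofReal R) :
    ∑' j : {j : Fin d → ℕ // (∀ i, 1 ≤ j i) ∧ I < ∏ i, (j i : ℝ)},
      ∏ i, ((j.1 i : ℝ)) ^ (-γ - 1) ≤ R := by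
  have hnn : ∀ j : Fin d → ℕ, 0 ≤ ∏ i, ((j i : ℝ)) ^ (-γ - 1) := fun j => by positivity
  have hreal : ∑' j : {j : Fin d → ℕ // (∀ i, 1 ≤ j i) ∧ I < ∏ i, (j i : ℝ)},
      ∏ i, ((j.1 i : ℝ)) ^ (-γ - 1)
        = (∑' j : {j : Fin d → ℕ // (∀ i, 1 ≤ j i) ∧ I < ∏ i, (j i : ℝ)},
            ENNReal.ofReal (∏ i, ((j.1 i : ℝ)) ^ (-γ - 1))).toReal := by
    rw [ENNReal.tsum_toReal_eq fun _ => ENNReal.ofReal_ne_top]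
    exact tsum_congr fun j => (ENNReal.toReal_ofReal (hnn j.1)).symm
  rw [hreal]
  refine ENNReal.toReal_le_of_le_ofReal hR (le_trans ?_ h)
  refine (tsum_congr fun j => ?_).trans_le
    (ENNReal.tsum_comp_le_tsum_of_injective Subtype.val_injective _)
  rw [if_pos j.2.2, ENNReal.ofReal_prod_of_nonneg fun i _ => by positivity]
  rfl

end TailProdSum

/-- Tail sum bound: `∑_{∏ j_i > I} ∏ j_i^{-γ-1} ≤ C · I^{-γ} (log I)^{d-1}`
for a constant `C` depending only on `d` and `γ`. -/
theorem tail_prod_sum_upper (d : ℕ) (hd : 1 ≤ d) (γ : ℝ) (hγ : 0 < γ) :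
    ∃ C > (0:ℝ), ∀ I : ℝ, 2 ≤ I →
      (∑' j : {j : Fin d → ℕ // (∀ i, 1 ≤ j i) ∧ I < ∏ i, (j i : ℝ)},
          ∏ i, ((j.1 i : ℝ)) ^ (-γ - 1))
        ≤ C * I ^ (-γ) * (Real.log I) ^ (d - 1) := by
  obtain ⟨d, rfl⟩ : ∃ d', d = d' + 1 := ⟨d - 1, by omega⟩
  obtain ⟨C, hC, hT⟩ := TailProdSum.exists_tailSum_succ_le hγ d
  refine ⟨C * (1 + (log 2)⁻¹) ^ d, by positivity, fun I hI => ?_⟩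
  have hlogI : 0 ≤ log I := log_nonneg (by linarith)
  rw [Nat.add_sub_cancel]
  refine TailProdSum.tsum_subtype_le_of_tailSum_le (by positivity)
    ((hT I (by linarith)).trans (ENNReal.ofReal_le_ofReal ?_))
  calc C * I ^ (-γ) * (log I + 1) ^ d ≤ C * I ^ (-γ) * ((1 + (log 2)⁻¹) * log I) ^ d := by
        gcongr
        exact TailProdSum.log_add_one_le_mul_log hI
    _ = C * (1 + (log 2)⁻¹) ^ d * I ^ (-γ) * log I ^ d := by rw [mul_pow]; ring
end

section
/- Let d ≥ 1 be an integer, γ > 0, and I sufficiently large (depending on d and γ). Then the sum over all d-tuples of positive integers j with product exceeding I of ∏_{i=1}^d j_i^{-γ-1} is bounded below by a constant (depending only on d and γ) times I^{-γ} (log I)^{d-1}. -/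
/-!
Split `(ℕ_{>0})^d` into the dyadic boxes `∏ i, [2^{e_i}, 2^{e_i+1})`. Choose `K` with
`I < 2^K ≤ 2I`. Every box with `∑ e_i = K` lies in the tail region, has `2^K` points, and on it the
summand is at least `2^{-(K+d)(γ+1)}`; so each such box contributes at least
`2^{-Kγ} 2^{-d(γ+1)} ≥ (2I)^{-γ} 2^{-d(γ+1)}`. By stars and bars there are
`C(K+d-1, d-1) ≥ (K+1)^{d-1}/(d-1)!` such boxes, and `K ≥ log I / log 2`.
-/

open Real Finset

section
variable {ι : Type*} [Fintype ι] [DecidableEq ι]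

def dyadicBox (e : ι → ℕ) : Finset (ι → ℕ) :=
  Fintype.piFinset fun i => Ico (2 ^ e i) (2 ^ (e i + 1))

lemma card_dyadicBox (e : ι → ℕ) : #(dyadicBox e) = 2 ^ ∑ i, e i := by
  simp [dyadicBox, Fintype.card_piFinset, pow_succ, mul_two, prod_pow_eq_pow_sum]

lemma log_eq_of_mem_dyadicBox {e j : ι → ℕ} (hj : j ∈ dyadicBox e) (i : ι) :
    Nat.log 2 (j i) = e i := by
  have := Fintype.mem_piFinset.1 hj i
  rw [mem_Ico] at this
  exact Nat.log_eq_of_pow_le_of_lt_pow this.1 this.2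

lemma pairwiseDisjoint_dyadicBox (s : Set (ι → ℕ)) : s.PairwiseDisjoint dyadicBox := by
  intro e _ e' _ hne
  refine disjoint_left.2 fun j hj hj' => hne ?_
  funext i
  rw [← log_eq_of_mem_dyadicBox hj i, log_eq_of_mem_dyadicBox hj' i]

lemma one_le_of_mem_dyadicBox {e j : ι → ℕ} (hj : j ∈ dyadicBox e) (i : ι) : 1 ≤ j i :=
  Nat.one_le_two_pow.trans (mem_Ico.1 (Fintype.mem_piFinset.1 hj i)).1

lemma two_pow_le_prod_of_mem_dyadicBox {e j : ι → ℕ} (hj : j ∈ dyadicBox e) :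
    2 ^ ∑ i, e i ≤ ∏ i, j i := by
  rw [← prod_pow_eq_pow_sum]
  exact prod_le_prod' fun i _ => (mem_Ico.1 (Fintype.mem_piFinset.1 hj i)).1

lemma prod_le_two_pow_of_mem_dyadicBox {e j : ι → ℕ} (hj : j ∈ dyadicBox e) :
    ∏ i, j i ≤ 2 ^ (∑ i, e i + Fintype.card ι) := by
  rw [show ∑ i, e i + Fintype.card ι = ∑ i, (e i + 1) by simp [sum_add_distrib],
    ← prod_pow_eq_pow_sum]
  exact prod_le_prod' fun i _ => (mem_Ico.1 (Fintype.mem_piFinset.1 hj i)).2.le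

variable (ι) in
def dyadicShell (K : ℕ) : Finset (ι → ℕ) :=
  (piAntidiag univ K).biUnion dyadicBox

lemma card_dyadicShell (K : ℕ) :
    #(dyadicShell ι K) = #(piAntidiag (univ : Finset ι) K) * 2 ^ K := by
  rw [dyadicShell, card_biUnion (pairwiseDisjoint_dyadicBox _), ← smul_eq_mul, ← sum_const]
  refine sum_congr rfl fun e he => ?_
  rw [card_dyadicBox, (mem_piAntidiag.1 he).1]

lemma mem_dyadicShell {K : ℕ} {j : ι → ℕ} :
    j ∈ dyadicShell ι K ↔ ∃ e : ι → ℕ, ∑ i, e i = K ∧ j ∈ dyadicBox e := by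
  simp [dyadicShell]

lemma card_piAntidiag_univ (K : ℕ) :
    #(piAntidiag (univ : Finset ι) K) = (Fintype.card ι + K - 1).choose K := by
  rw [← card_univ, ← card_finsuppAntidiag_nat_eq_choose, finsuppAntidiag, card_map, card_attach]

lemma pow_div_factorial_le_card_piAntidiag [Nonempty ι] (K : ℕ) :
    ((K + 1 : ℝ) ^ (Fintype.card ι - 1)) / (Fintype.card ι - 1).factorial
      ≤ #(piAntidiag (univ : Finset ι) K) := by
  obtain ⟨m, hm⟩ := Nat.exists_eq_add_one_of_ne_zero (Fintype.card_ne_zero (α := ι))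
  rw [card_piAntidiag_univ, hm, show m + 1 + K - 1 = K + m by omega, Nat.choose_symm_add,
    Nat.add_sub_cancel]
  have := Nat.pow_le_choose (α := ℝ) m (K + m)
  rwa [show K + m + 1 - m = K + 1 by omega, Nat.cast_add_one] at this

end

lemma Summable.pi_prod_of_nonneg {ι α : Type*} [Fintype ι] {f : α → ℝ} (hf : Summable f)
    (hf0 : 0 ≤ f) : Summable fun j : ι → α => ∏ i, f (j i) := by
  classical
  refine summable_of_sum_le (c := ∏ _i : ι, ∑' a, f a) (fun j => prod_nonneg fun i _ => hf0 _)
    fun s => ?_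
  calc ∑ j ∈ s, ∏ i, f (j i)
      ≤ ∑ j ∈ Fintype.piFinset (fun i => s.image (· i)), ∏ i, f (j i) :=
        sum_le_sum_of_subset_of_nonneg
          (fun j hj => Fintype.mem_piFinset.2 fun i => mem_image_of_mem _ hj)
          (fun j _ _ => prod_nonneg fun i _ => hf0 _)
    _ = ∏ i, ∑ a ∈ s.image (· i), f a := (prod_univ_sum _ _).symm
    _ ≤ ∏ _i : ι, ∑' a, f a :=
        prod_le_prod (fun i _ => sum_nonneg fun a _ => hf0 a)
          fun i _ => hf.sum_le_tsum _ fun a _ => hf0 a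

lemma exists_two_pow_btwn {I : ℝ} (hI : 1 ≤ I) : ∃ K : ℕ, I < 2 ^ K ∧ 2 ^ K ≤ 2 * I := by
  obtain ⟨n, hn, hn'⟩ := exists_nat_pow_near hI one_lt_two
  exact ⟨n + 1, hn', by rw [pow_succ]; linarith⟩

lemma card_dyadicShell_mul_le_tsum {ι : Type*} [Fintype ι] [DecidableEq ι] {γ I : ℝ} {K : ℕ}
    (hγ : 0 < γ) (hIK : I < 2 ^ K) :
    #(dyadicShell ι K) * ((2 : ℝ) ^ (K + Fintype.card ι)) ^ (-γ - 1)
      ≤ ∑' j : {j : ι → ℕ // (∀ i, 1 ≤ j i) ∧ I < ∏ i, (j i : ℝ)}, ∏ i, (j.1 i : ℝ) ^ (-γ - 1) := by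
  set w : (ι → ℕ) → ℝ := fun j => ∏ i, (j i : ℝ) ^ (-γ - 1)
  have hw0 : 0 ≤ w := fun j => prod_nonneg fun i _ => rpow_nonneg (Nat.cast_nonneg _) _
  have hprod {j : ι → ℕ} (hj : j ∈ dyadicShell ι K) :
      (2 : ℝ) ^ K ≤ ∏ i, (j i : ℝ) ∧ ∏ i, (j i : ℝ) ≤ 2 ^ (K + Fintype.card ι) := by
    obtain ⟨e, rfl, hbox⟩ := mem_dyadicShell.1 hj
    constructor
    · exact_mod_cast two_pow_le_prod_of_mem_dyadicBox hbox
    · exact_mod_cast prod_le_two_pow_of_mem_dyadicBox hbox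
  have hweight {j : ι → ℕ} (hj : j ∈ dyadicShell ι K) :
      ((2 : ℝ) ^ (K + Fintype.card ι)) ^ (-γ - 1) ≤ w j := by
    rw [show w j = (∏ i, (j i : ℝ)) ^ (-γ - 1) from
      finsetProd_rpow _ _ (fun i _ => Nat.cast_nonneg _) _]
    exact rpow_le_rpow_of_nonpos (by linarith [hprod hj, pow_pos (two_pos (α := ℝ)) K])
      (hprod hj).2 (by linarith)
  let toTail (j : dyadicShell ι K) : {j : ι → ℕ // (∀ i, 1 ≤ j i) ∧ I < ∏ i, (j i : ℝ)} :=
    ⟨j, fun i => by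
      obtain ⟨e, -, hbox⟩ := mem_dyadicShell.1 j.2
      exact one_le_of_mem_dyadicBox hbox i, hIK.trans_le (hprod j.2).1⟩
  have hw : Summable w := (summable_nat_rpow.2 (by linarith)).pi_prod_of_nonneg
    fun n => rpow_nonneg (Nat.cast_nonneg n) _
  calc #(dyadicShell ι K) * ((2 : ℝ) ^ (K + Fintype.card ι)) ^ (-γ - 1)
      ≤ ∑ j ∈ dyadicShell ι K, w j := by
        rw [← nsmul_eq_mul, ← sum_const]
        exact sum_le_sum fun j hj => hweight hj
    _ = ∑' j : dyadicShell ι K, w j := (Finset.tsum_subtype _ w).symm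
    _ ≤ ∑' j : {j : ι → ℕ // (∀ i, 1 ≤ j i) ∧ I < ∏ i, (j i : ℝ)}, w j :=
        Summable.tsum_le_tsum_of_inj toTail (fun _ _ h => Subtype.ext (Subtype.mk.inj h))
          (fun _ _ => hw0 _) (fun _ => le_rfl) Summable.of_finite (hw.subtype _)

/-- Tail sum lower bound: for `I` sufficiently large (depending on `d, γ`),
`∑_{∏ j_i > I} ∏ j_i^{-γ-1} ≥ c · I^{-γ} (log I)^{d-1}`. -/
theorem tail_prod_sum_lower (d : ℕ) (hd : 1 ≤ d) (γ : ℝ) (hγ : 0 < γ) :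
    ∃ c > (0:ℝ), ∃ I₀ : ℝ, 2 ≤ I₀ ∧ ∀ I : ℝ, I₀ ≤ I →
      c * I ^ (-γ) * (Real.log I) ^ (d - 1)
        ≤ ∑' j : {j : Fin d → ℕ // (∀ i, 1 ≤ j i) ∧ I < ∏ i, (j i : ℝ)},
            ∏ i, ((j.1 i : ℝ)) ^ (-γ - 1) := by
  have : Nonempty (Fin d) := ⟨⟨0, hd⟩⟩
  refine ⟨(2 : ℝ) ^ (-γ) * ((2 : ℝ) ^ d) ^ (-γ - 1) / ((d - 1).factorial * log 2 ^ (d - 1)),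
    by positivity, 2, le_rfl, fun I hI => ?_⟩
  obtain ⟨K, hIK, hKI⟩ := exists_two_pow_btwn (by linarith : (1 : ℝ) ≤ I)
  have hlog : log I / log 2 ≤ K + 1 := by
    have := log_le_log (by linarith) hIK.le
    rw [log_pow, ← div_le_iff₀ (log_pos one_lt_two)] at this
    linarith
  have hscale : (2 : ℝ) ^ (-γ) * I ^ (-γ) ≤ ((2 : ℝ) ^ K) ^ (-γ) := by
    rw [← mul_rpow zero_le_two (by linarith)]
    exact rpow_le_rpow_of_nonpos (by positivity) hKI (by linarith)
  have hcard := pow_div_factorial_le_card_piAntidiag (ι := Fin d) K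
  rw [Fintype.card_fin] at hcard
  calc _ = (log I / log 2) ^ (d - 1) / (d - 1).factorial
        * ((2 : ℝ) ^ (-γ) * I ^ (-γ) * ((2 : ℝ) ^ d) ^ (-γ - 1)) := by
        rw [div_pow]
        field_simp
    _ ≤ (K + 1 : ℝ) ^ (d - 1) / (d - 1).factorial
        * (((2 : ℝ) ^ K) ^ (-γ) * ((2 : ℝ) ^ d) ^ (-γ - 1)) := by
        gcongr
        exact div_nonneg (log_nonneg (by linarith)) (log_nonneg one_le_two)
    _ ≤ #(piAntidiag (univ : Finset (Fin d)) K)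
        * (((2 : ℝ) ^ K) ^ (-γ) * ((2 : ℝ) ^ d) ^ (-γ - 1)) := by
        gcongr
    _ = #(dyadicShell (Fin d) K) * ((2 : ℝ) ^ (K + Fintype.card (Fin d))) ^ (-γ - 1) := by
        rw [card_dyadicShell, Fintype.card_fin, pow_add, mul_rpow (by positivity) (by positivity),
          rpow_sub_one (x := (2 : ℝ) ^ K) (by positivity)]
        push_cast
        field_simp
    _ ≤ _ := card_dyadicShell_mul_le_tsum hγ hIK
end

section
/- Fix an integer d ≥ 1, reals a ∈ (0,1), k ≥ 1 integer, and set J_a = a^{-1} log(N/σ²) for N/σ² > e. Let 𝓝_d = { j ∈ (ℕ_{>0})^d : ∑_{i=1}^d j_i ≤ J_a + c/a } for a constant c > 0. Then ∑_{j ∉ 𝓝_d} e^{-a k ∑_{i=1}^d j_i} ≤ C a^{-d} (N/σ²)^{-k} (log(N/σ²))^{d-1} for a constant C depending only on d, k, c. -/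
/-! Write `j = (m, j')` and `|j'| = ∑ j'_i`. Summing first over `m`, the geometric tail gives
`∑_{m > T - |j'|} e^{-bm} ≤ e^{-b (T - |j'|)⁺} / (1 - e^{-b}) ≤ e^{-θ (T - |j'|)} / (1 - e^{-b})`
for any `0 ≤ θ ≤ b`, and summing the remaining `e^{-(b - θ)|j'|}` over positive `j'` costs
`(b - θ)^{-(d-1)}`. The tilt `b - θ = b / (1 + bT)` loses only a factor `e`, which leaves
`e^{-bT} ((1 + bT)/b)^{d-1} / (1 - e^{-b})`; with `b = ak` and `T = (log (N/σ²) + c)/a` this is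
`≲ a^{-d} (N/σ²)^{-k} log(N/σ²)^{d-1}`. -/

open Real

theorem tsum_exp_neg_mul_of_ge {b : ℝ} (hb : 0 < b) (n₀ : ℕ) :
    ∑' m : ℕ, (if n₀ ≤ m then ENNReal.ofReal (exp (-(b * m))) else 0)
      = ENNReal.ofReal (exp (-(b * n₀)) / (1 - exp (-b))) := by
  have hr0 : 0 ≤ exp (-b) := (exp_pos _).le
  have hr1 : exp (-b) < 1 := exp_lt_one_iff.2 (neg_lt_zero.2 hb)
  have hshift : ∀ i : ℕ, exp (-(b * ↑(i + n₀))) = exp (-(b * n₀)) * exp (-b) ^ i := by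
    intro i
    rw [← exp_nat_mul, ← exp_add]
    push_cast
    ring_nf
  rw [← (add_left_injective n₀).tsum_eq]
  · simp only [le_add_iff_nonneg_left, zero_le, if_true, hshift]
    rw [← ENNReal.ofReal_tsum_of_nonneg (fun i => by positivity)
      ((summable_geometric_of_lt_one hr0 hr1).mul_left _), tsum_mul_left,
      tsum_geometric_of_lt_one hr0 hr1, div_eq_mul_inv]
  · intro m hm
    have : n₀ ≤ m := by by_contra h; simp [h] at hm
    exact ⟨m - n₀, Nat.sub_add_cancel this⟩

theorem tsum_exp_neg_mul_pos_le {b : ℝ} (hb : 0 < b) :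
    ∑' m : ℕ, (if 1 ≤ m then ENNReal.ofReal (exp (-(b * m))) else 0) ≤ ENNReal.ofReal b⁻¹ := by
  rw [tsum_exp_neg_mul_of_ge hb]
  refine ENNReal.ofReal_le_ofReal ?_
  have h : b ≤ exp b - 1 := by linarith [add_one_le_exp b]
  calc exp (-(b * (1 : ℕ))) / (1 - exp (-b)) = (exp b - 1)⁻¹ := by
        rw [Nat.cast_one, mul_one, exp_neg]
        have : 0 < exp b - 1 := by linarith
        field_simp
    _ ≤ b⁻¹ := inv_anti₀ hb h

theorem tsum_exp_neg_mul_tail_le {b θ : ℝ} (hb : 0 < b) (hθ : 0 ≤ θ) (hθb : θ ≤ b) (t : ℝ) :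
    ∑' m : ℕ, (if 1 ≤ m ∧ t < m then ENNReal.ofReal (exp (-(b * m))) else 0)
      ≤ ENNReal.ofReal (exp (-(θ * t)) / (1 - exp (-b))) := by
  have hcond : ∀ m : ℕ, (1 ≤ m ∧ t < m) ↔ ⌊t⌋₊ + 1 ≤ m := by
    intro m
    constructor
    · rintro ⟨h1, h2⟩
      exact (Nat.floor_lt' (by omega)).2 h2
    · intro h
      exact ⟨by omega, (Nat.floor_lt' (by omega)).1 h⟩
  simp only [hcond]
  rw [tsum_exp_neg_mul_of_ge hb]
  have h1 : 0 < 1 - exp (-b) := sub_pos.2 (exp_lt_one_iff.2 (neg_lt_zero.2 hb))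
  have ht : t ≤ ((⌊t⌋₊ + 1 : ℕ) : ℝ) := by push_cast; exact (Nat.lt_floor_add_one t).le
  refine ENNReal.ofReal_le_ofReal (div_le_div_of_nonneg_right (exp_le_exp.2 ?_) h1.le)
  rw [neg_le_neg_iff]
  calc θ * t ≤ θ * ((⌊t⌋₊ + 1 : ℕ) : ℝ) := by gcongr
    _ ≤ b * ((⌊t⌋₊ + 1 : ℕ) : ℝ) := by gcongr

theorem tsum_exp_neg_mul_sum_pos_le {β : ℝ} (hβ : 0 < β) (n : ℕ) :
    ∑' j : Fin n → ℕ, (if ∀ i, 1 ≤ j i then ENNReal.ofReal (exp (-(β * ∑ i, (j i : ℝ)))) else 0)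
      ≤ ENNReal.ofReal (β⁻¹ ^ n) := by
  induction n with
  | zero => simp
  | succ n ih =>
    rw [← (Fin.consEquiv fun _ => ℕ).tsum_eq, ENNReal.tsum_prod']
    have hsplit : ∀ (m : ℕ) (j : Fin n → ℕ),
        (if ∀ i, 1 ≤ (Fin.consEquiv (fun _ => ℕ) (m, j)) i then
          ENNReal.ofReal (exp (-(β * ∑ i, ((Fin.consEquiv (fun _ => ℕ) (m, j)) i : ℝ)))) else 0)
        = (if 1 ≤ m then ENNReal.ofReal (exp (-(β * m))) else 0) *
          (if ∀ i, 1 ≤ j i then ENNReal.ofReal (exp (-(β * ∑ i, (j i : ℝ)))) else 0) := by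
      intro m j
      simp only [Fin.consEquiv_apply, Fin.forall_fin_succ, Fin.cons_zero, Fin.cons_succ,
        Fin.sum_univ_succ, mul_add, neg_add, exp_add]
      split_ifs <;> simp_all [ENNReal.ofReal_mul (exp_pos _).le]
    simp only [hsplit, ENNReal.tsum_mul_left, ENNReal.tsum_mul_right]
    calc _ ≤ ENNReal.ofReal β⁻¹ * ENNReal.ofReal (β⁻¹ ^ n) := by
          gcongr
          exact tsum_exp_neg_mul_pos_le hβ
      _ = ENNReal.ofReal (β⁻¹ ^ (n + 1)) := by
          rw [← ENNReal.ofReal_mul (by positivity), pow_succ']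

theorem tsum_exp_neg_mul_sum_tail_le_of_tilt {b θ : ℝ} (hθ : 0 ≤ θ) (hθb : θ < b) (T : ℝ)
    (n : ℕ) :
    ∑' j : Fin (n + 1) → ℕ, (if (∀ i, 1 ≤ j i) ∧ T < ∑ i, (j i : ℝ) then
        ENNReal.ofReal (exp (-(b * ∑ i, (j i : ℝ)))) else 0)
      ≤ ENNReal.ofReal (exp (-(θ * T)) / (1 - exp (-b)) * (b - θ)⁻¹ ^ n) := by
  have hb : 0 < b := hθ.trans_lt hθb
  have hD : 0 < 1 - exp (-b) := sub_pos.2 (exp_lt_one_iff.2 (neg_lt_zero.2 hb))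
  rw [← (Fin.consEquiv fun _ => ℕ).tsum_eq, ENNReal.tsum_prod', ENNReal.tsum_comm]
  have hsplit : ∀ (m : ℕ) (j : Fin n → ℕ),
      (if (∀ i, 1 ≤ (Fin.consEquiv (fun _ => ℕ) (m, j)) i) ∧
          T < ∑ i, ((Fin.consEquiv (fun _ => ℕ) (m, j)) i : ℝ) then
        ENNReal.ofReal (exp (-(b * ∑ i, ((Fin.consEquiv (fun _ => ℕ) (m, j)) i : ℝ)))) else 0)
      = (if ∀ i, 1 ≤ j i then ENNReal.ofReal (exp (-(b * ∑ i, (j i : ℝ)))) else 0) *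
        (if 1 ≤ m ∧ T - ∑ i, (j i : ℝ) < m then ENNReal.ofReal (exp (-(b * m))) else 0) := by
    intro m j
    simp only [Fin.consEquiv_apply, Fin.forall_fin_succ, Fin.cons_zero, Fin.cons_succ,
      Fin.sum_univ_succ, mul_add, neg_add, exp_add, sub_lt_iff_lt_add]
    split_ifs <;> simp_all [ENNReal.ofReal_mul (exp_pos _).le, mul_comm]
  have htilt : ∀ j : Fin n → ℕ,
      (if ∀ i, 1 ≤ j i then ENNReal.ofReal (exp (-(b * ∑ i, (j i : ℝ)))) else 0) *
        ENNReal.ofReal (exp (-(θ * (T - ∑ i, (j i : ℝ)))) / (1 - exp (-b)))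
      = ENNReal.ofReal (exp (-(θ * T)) / (1 - exp (-b))) *
        (if ∀ i, 1 ≤ j i then ENNReal.ofReal (exp (-((b - θ) * ∑ i, (j i : ℝ)))) else 0) := by
    intro j
    split_ifs
    · rw [← ENNReal.ofReal_mul (exp_pos _).le,
        ← ENNReal.ofReal_mul (div_nonneg (exp_pos _).le hD.le)]
      congr 1
      have h : exp (-(b * ∑ i, (j i : ℝ))) * exp (-(θ * (T - ∑ i, (j i : ℝ))))
          = exp (-(θ * T)) * exp (-((b - θ) * ∑ i, (j i : ℝ))) := by
        rw [← exp_add, ← exp_add]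
        ring_nf
      rw [div_eq_mul_inv, div_eq_mul_inv]
      linear_combination (1 - exp (-b))⁻¹ * h
    · simp
  simp only [hsplit, ENNReal.tsum_mul_left]
  calc _ ≤ ∑' j : Fin n → ℕ,
        (if ∀ i, 1 ≤ j i then ENNReal.ofReal (exp (-(b * ∑ i, (j i : ℝ)))) else 0) *
          ENNReal.ofReal (exp (-(θ * (T - ∑ i, (j i : ℝ)))) / (1 - exp (-b))) := by
        gcongr with j
        exact tsum_exp_neg_mul_tail_le hb hθ hθb.le _
    _ = ENNReal.ofReal (exp (-(θ * T)) / (1 - exp (-b))) * ∑' j : Fin n → ℕ,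
          (if ∀ i, 1 ≤ j i then ENNReal.ofReal (exp (-((b - θ) * ∑ i, (j i : ℝ)))) else 0) := by
        simp only [htilt, ENNReal.tsum_mul_left]
    _ ≤ ENNReal.ofReal (exp (-(θ * T)) / (1 - exp (-b))) * ENNReal.ofReal ((b - θ)⁻¹ ^ n) := by
        gcongr
        exact tsum_exp_neg_mul_sum_pos_le (sub_pos.2 hθb) n
    _ = _ := (ENNReal.ofReal_mul (div_nonneg (exp_pos _).le hD.le)).symm

theorem tsum_subtype_eq_toReal_tsum_ite {α : Type*} (p : α → Prop) [DecidablePred p]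
    {f : α → ℝ} (hf : ∀ x, 0 ≤ f x) :
    ∑' x : {x // p x}, f x = (∑' x, if p x then ENNReal.ofReal (f x) else 0).toReal := by
  refine (tsum_subtype {x | p x} f).trans ?_
  rw [ENNReal.tsum_toReal_eq fun _ => by split_ifs <;> simp]
  refine tsum_congr fun x => ?_
  by_cases hx : p x <;> simp [hx, hf x]

theorem tsum_exp_neg_mul_sum_tail_le {b T : ℝ} (hb : 0 < b) (hT : 0 ≤ T) (n : ℕ) :
    ∑' j : {j : Fin (n + 1) → ℕ // (∀ i, 1 ≤ j i) ∧ T < ∑ i, (j i : ℝ)},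
        exp (-(b * ∑ i, (j.1 i : ℝ)))
      ≤ exp 1 * exp (-(b * T)) / (1 - exp (-b)) * ((1 + b * T) / b) ^ n := by
  have hbT : 0 < 1 + b * T := by positivity
  set θ := b - b / (1 + b * T) with hθ
  have hθ0 : 0 ≤ θ := sub_nonneg.2 (div_le_self hb.le (by nlinarith))
  have hθb : θ < b := sub_lt_self _ (by positivity)
  have hD : 0 < 1 - exp (-b) := sub_pos.2 (exp_lt_one_iff.2 (neg_lt_zero.2 hb))
  have hθT : exp (-(θ * T)) ≤ exp 1 * exp (-(b * T)) := by
    rw [← exp_add, exp_le_exp, hθ]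
    have : b / (1 + b * T) * T ≤ 1 := by
      rw [div_mul_eq_mul_div, div_le_one hbT]
      linarith
    nlinarith
  have hbound := tsum_exp_neg_mul_sum_tail_le_of_tilt hθ0 hθb T n
  refine (tsum_subtype_eq_toReal_tsum_ite _ fun _ => (exp_pos _).le).trans_le
    ((ENNReal.toReal_le_of_le_ofReal (by positivity) hbound).trans ?_)
  rw [hθ, sub_sub_cancel, inv_div]
  gcongr

theorem inv_one_sub_exp_neg_le {x : ℝ} (hx : 0 < x) : (1 - exp (-x))⁻¹ ≤ 1 + x⁻¹ := by
  have h : x / (1 + x) ≤ 1 - exp (-x) := by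
    have : exp (-x) ≤ (1 + x)⁻¹ := by
      rw [exp_neg]
      exact inv_anti₀ (by positivity) (by linarith [add_one_le_exp x])
    calc x / (1 + x) = 1 - (1 + x)⁻¹ := by field_simp; ring
      _ ≤ 1 - exp (-x) := by linarith
  calc (1 - exp (-x))⁻¹ ≤ (x / (1 + x))⁻¹ := inv_anti₀ (by positivity) h
    _ = 1 + x⁻¹ := by field_simp; ring

theorem inv_one_sub_exp_neg_le_two_div {a x : ℝ} (ha0 : 0 < a) (ha1 : a ≤ 1) (hax : a ≤ x) :
    (1 - exp (-x))⁻¹ ≤ 2 / a := by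
  have h1 : 1 ≤ a⁻¹ := (one_le_inv₀ ha0).2 ha1
  have h2 : x⁻¹ ≤ a⁻¹ := inv_anti₀ ha0 hax
  linarith [inv_one_sub_exp_neg_le (ha0.trans_le hax), show 2 / a = a⁻¹ + a⁻¹ by ring]

/-- Exponential tail bound in dimension `d`: with `J_a = a⁻¹ log(N/σ²)` and the set
`𝓝_d = {j : ∑ j_i ≤ J_a + c/a}`, one has
`∑_{j ∉ 𝓝_d} e^{-ak ∑ j_i} ≤ C a^{-d} (N/σ²)^{-k} (log(N/σ²))^{d-1}`. -/
theorem exp_tail_multidim (d k : ℕ) (hd : 1 ≤ d) (hk : 1 ≤ k) (c : ℝ) (hc : 0 < c) :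
    ∃ C > (0:ℝ), ∀ a ∈ Set.Ioo (0:ℝ) 1, ∀ N σsq : ℝ, 0 < σsq →
      Real.exp 1 < N / σsq →
      (∑' j : {j : Fin d → ℕ // (∀ i, 1 ≤ j i) ∧
            a⁻¹ * Real.log (N / σsq) + c / a < ∑ i, (j i : ℝ)},
          Real.exp (-(a * k * ∑ i, (j.1 i : ℝ))))
        ≤ C * a ^ (-(d : ℝ)) * (N / σsq) ^ (-(k : ℝ)) *
            (Real.log (N / σsq)) ^ (d - 1) := by
  obtain ⟨n, rfl⟩ : ∃ n, d = n + 1 := ⟨d - 1, by omega⟩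
  refine ⟨2 * exp 1 * (1 + k + k * c) ^ n, by positivity, ?_⟩
  rintro a ⟨ha0, ha1⟩ N σsq - hN
  set R := N / σsq
  have hR : 0 < R := (exp_pos 1).trans hN
  have hL : 1 < log R := (lt_log_iff_exp_lt hR).2 hN
  have hkT : a * k * (a⁻¹ * log R + c / a) = k * (log R + c) := by field_simp
  refine (tsum_exp_neg_mul_sum_tail_le (by positivity) (by positivity) n).trans ?_
  have hexp : exp (-(k * (log R + c))) ≤ R ^ (-(k : ℝ)) := by
    rw [rpow_def_of_pos hR, exp_le_exp]
    nlinarith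
  have hak : a ≤ a * k := le_mul_of_one_le_right ha0.le (by exact_mod_cast hk)
  have hI := inv_one_sub_exp_neg_le_two_div ha0 ha1.le hak
  have hpoly : (1 + k * (log R + c)) / (a * k) ≤ (1 + k + k * c) * log R / a := by
    calc (1 + k * (log R + c)) / (a * k) ≤ (1 + k * (log R + c)) / a :=
          div_le_div_of_nonneg_left (by positivity) ha0 hak
      _ ≤ (1 + k + k * c) * log R / a := by
          gcongr
          have : 0 ≤ k * c := by positivity
          nlinarith
  have hD : 0 < 1 - exp (-(a * k)) := sub_pos.2 (exp_lt_one_iff.2 (by simp; positivity))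
  rw [hkT, div_eq_mul_inv]
  calc _ ≤ exp 1 * R ^ (-(k : ℝ)) * (2 / a) * ((1 + k + k * c) * log R / a) ^ n := by
        gcongr
    _ = _ := by
        rw [rpow_neg ha0.le, rpow_natCast, Nat.add_sub_cancel, div_pow, mul_pow]
        field_simp
        ring
end

section
/- Let μ_j = e^{-a ∑_{i=1}^d j_i} for j ∈ (ℕ_{>0})^d with a ∈ (0,1), and let ν_j = Nμ_j/(σ² + Nμ_j) with N/σ² > e^{d+1}. Then for every integer k ≥ 1, ∑_{j ∈ (ℕ_{>0})^d} ν_j^k is bounded above and below by constant multiples (depending only on d and k) of (a^{-1} log(N/σ²))^d. -/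
/-!
Write `R = N/σ²`, `L = log R` and `s(j) = j₁ + ⋯ + j_d`, so that `ν_j = Rμ_j/(1 + Rμ_j)` with
`μ_j = e^{-a s(j)}`.

Upper bound: `ν_j^k ≤ ν_j ≤ min(1, Rμ_j) ≤ (Rμ_j)^t` for every `t ∈ [0, 1]`. The choice `t = d/L`
turns `R^t` into `e^d`, and `(Rμ_j)^t = e^d ∏ᵢ e^{-c jᵢ}` with `c = da/L` is a product of geometric
sequences, summing to `e^d (e^c - 1)^{-d} ≤ e^d c^{-d} = (e/d)^d J_a^d`.

Lower bound: on the box `jᵢ ≤ m = ⌊J_a/d⌋` we have `a s(j) ≤ L`, hence `Rμ_j ≥ 1` and `ν_j ≥ 1/2`;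
the box has `m^d ≥ (J_a/(d(d+1)))^d` points since `J_a > d + 1`.
-/

open Real

lemma hasSum_pnat_geometric {x : ℝ} (h0 : 0 ≤ x) (h1 : x < 1) :
    HasSum (fun n : ℕ+ => x ^ (n : ℕ)) (x / (1 - x)) := by
  have hsum : x / (1 - x) + x ^ 0 = (1 - x)⁻¹ := by
    field_simp [(sub_pos.mpr h1).ne']
    ring
  exact hasSum_pnat_iff.mpr (hsum ▸ hasSum_geometric_of_lt_one h0 h1)

lemma hasSum_pi_prod_of_nonneg {ι : Type*} {f : ι → ℝ} {s : ℝ} (hf0 : 0 ≤ f) (hf : HasSum f s)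
    (d : ℕ) : HasSum (fun j : Fin d → ι => ∏ i, f (j i)) (s ^ d) := by
  induction d with
  | zero => simp
  | succ d ih =>
    have hprod_nonneg : 0 ≤ fun j : Fin d → ι => ∏ i, f (j i) :=
      fun j => Finset.prod_nonneg fun i _ => hf0 (j i)
    have hsummable := Summable.mul_of_nonneg hf.summable ih.summable hf0 hprod_nonneg
    rw [← (Fin.consEquiv fun _ => ι).hasSum_iff, pow_succ']
    have hcons : (fun j : Fin (d + 1) → ι => ∏ i, f (j i)) ∘ Fin.consEquiv (fun _ => ι) =
        fun p => f p.1 * ∏ i, f (p.2 i) := by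
      ext ⟨b, c⟩
      simp [Fin.consEquiv_apply, Fin.prod_univ_succ]
    rw [hcons]
    exact HasSum.mul (f := f) (g := fun j : Fin d → ι => ∏ i, f (j i)) hf ih hsummable

lemma exp_neg_div_one_sub_exp_neg_le {c : ℝ} (hc : 0 < c) : exp (-c) / (1 - exp (-c)) ≤ c⁻¹ := by
  have hexp : exp (-c) * exp c = 1 := by rw [← exp_add, neg_add_cancel, exp_zero]
  have h1 : exp (-c) < 1 := exp_lt_one_iff.mpr (neg_neg_of_pos hc)
  rw [div_le_iff₀ (sub_pos.mpr h1), inv_mul_eq_div, le_div_iff₀ hc]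
  nlinarith [add_one_le_exp c, exp_pos (-c)]

lemma min_one_le_rpow {x t : ℝ} (hx : 0 ≤ x) (ht0 : 0 ≤ t) (ht1 : t ≤ 1) : min 1 x ≤ x ^ t := by
  rcases le_total x 1 with h | h
  · calc min 1 x ≤ x ^ (1 : ℝ) := by rw [rpow_one]; exact min_le_right _ _
      _ ≤ x ^ t := rpow_le_rpow_of_exponent_ge' hx h ht0 ht1
  · exact (min_le_left _ _).trans (one_le_rpow h ht0)

lemma div_add_pow_le_rpow {σ y t : ℝ} {k : ℕ} (hσ : 0 < σ) (hy : 0 ≤ y) (ht0 : 0 ≤ t)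
    (ht1 : t ≤ 1) (hk : k ≠ 0) : (y / (σ + y)) ^ k ≤ (y / σ) ^ t := by
  have hle_one : y / (σ + y) ≤ 1 := div_le_one_of_le₀ (by linarith) (by positivity)
  calc (y / (σ + y)) ^ k ≤ y / (σ + y) := pow_le_of_le_one (by positivity) hle_one hk
    _ ≤ min 1 (y / σ) := le_min hle_one (div_le_div_of_nonneg_left hy hσ (by linarith))
    _ ≤ (y / σ) ^ t := min_one_le_rpow (by positivity) ht0 ht1

lemma half_le_div_add_of_le {σ y : ℝ} (hσ : 0 < σ) (h : σ ≤ y) : 1 / 2 ≤ y / (σ + y) := by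
  rw [le_div_iff₀ (by linarith)]
  linarith

lemma exists_pnat_div_le_and_mul_le {D J : ℝ} (hD : 0 < D) (hJ : D + 1 ≤ J) :
    ∃ m : ℕ+, J / (D * (D + 1)) ≤ m ∧ D * m ≤ J := by
  have hJD : 1 ≤ J / D := by rw [le_div_iff₀ hD]; linarith
  refine ⟨⟨⌊J / D⌋₊, Nat.floor_pos.mpr hJD⟩, ?_, ?_⟩
  · calc J / (D * (D + 1)) ≤ J / D - 1 := by
          rw [div_sub_one hD.ne', div_le_div_iff₀ (by positivity) hD]
          nlinarith [mul_nonneg (mul_self_nonneg D) (sub_nonneg.mpr hJ)]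
      _ ≤ ⌊J / D⌋₊ := (Nat.sub_one_lt_floor _).le
  · calc D * ⌊J / D⌋₊ ≤ D * (J / D) := by gcongr; exact Nat.floor_le (by positivity)
      _ = J := by field_simp

lemma mul_pow_le_tsum_of_le_on_box {d : ℕ} {g : (Fin d → ℕ+) → ℝ} (hg0 : 0 ≤ g)
    (hg : Summable g) {c : ℝ} (m : ℕ+) (hc : ∀ j, (∀ i, j i ≤ m) → c ≤ g j) :
    c * (m : ℝ) ^ d ≤ ∑' j, g j := by
  set box := Fintype.piFinset fun _ : Fin d => Finset.Icc 1 m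
  have hcard : (box.card : ℝ) = (m : ℝ) ^ d := by simp [box, Fintype.card_piFinset]
  calc c * (m : ℝ) ^ d = box.card • c := by rw [nsmul_eq_mul, hcard, mul_comm]
    _ ≤ ∑ j ∈ box, g j := box.card_nsmul_le_sum g c fun j hj =>
        hc j fun i => (Finset.mem_Icc.mp (Fintype.mem_piFinset.mp hj i)).2
    _ ≤ ∑' j, g j := hg.sum_le_tsum box fun j _ => hg0 j

noncomputable def expEigenvalue {d : ℕ} (a : ℝ) (j : Fin d → ℕ+) : ℝ :=
  exp (-(a * ∑ i, ((j i : ℕ) : ℝ)))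

noncomputable def nu {d : ℕ} (a N σsq : ℝ) (j : Fin d → ℕ+) : ℝ :=
  N * expEigenvalue a j / (σsq + N * expEigenvalue a j)

lemma hasSum_expEigenvalue {c : ℝ} (hc : 0 < c) (d : ℕ) :
    HasSum (fun j : Fin d → ℕ+ => expEigenvalue c j) ((exp (-c) / (1 - exp (-c))) ^ d) := by
  have hprod : ∀ j : Fin d → ℕ+, expEigenvalue c j = ∏ i, exp (-c) ^ (j i : ℕ) := by
    intro j
    simp_rw [expEigenvalue, ← exp_nat_mul, ← exp_sum, Finset.mul_sum, ← Finset.sum_neg_distrib]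
    congr 1
    exact Finset.sum_congr rfl fun i _ => by ring
  simp_rw [hprod]
  exact hasSum_pi_prod_of_nonneg (fun n => by positivity)
    (hasSum_pnat_geometric (exp_pos _).le (exp_lt_one_iff.mpr (neg_neg_of_pos hc))) d

section

variable {d k : ℕ} {a N σsq : ℝ}

lemma expEigenvalue_pos (j : Fin d → ℕ+) : 0 < expEigenvalue a j := exp_pos _

lemma nu_nonneg (hN : 0 ≤ N) (hσ : 0 ≤ σsq) (j : Fin d → ℕ+) : 0 ≤ nu a N σsq j := by
  have := expEigenvalue_pos (a := a) j
  unfold nu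
  positivity

lemma nu_pow_le_exp_mul_expEigenvalue (hk : k ≠ 0) (hN : 0 < N) (hσ : 0 < σsq) {t : ℝ}
    (ht0 : 0 ≤ t) (ht1 : t ≤ 1) (j : Fin d → ℕ+) :
    nu a N σsq j ^ k ≤ exp (t * log (N / σsq)) * expEigenvalue (t * a) j := by
  have hR : 0 < N / σsq := div_pos hN hσ
  calc nu a N σsq j ^ k ≤ (N * expEigenvalue a j / σsq) ^ t :=
        div_add_pow_le_rpow hσ (by have := expEigenvalue_pos (a := a) j; positivity) ht0 ht1 hk
    _ = (N / σsq) ^ t * expEigenvalue a j ^ t := by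
        rw [mul_div_right_comm, mul_rpow hR.le (expEigenvalue_pos j).le]
    _ = exp (t * log (N / σsq)) * expEigenvalue (t * a) j := by
        rw [rpow_def_of_pos hR, expEigenvalue, expEigenvalue, ← exp_mul]
        ring_nf

lemma one_half_pow_le_nu_pow (hN : 0 < N) (hσ : 0 < σsq) {j : Fin d → ℕ+}
    (hj : a * ∑ i, ((j i : ℕ) : ℝ) ≤ log (N / σsq)) : (1 / 2) ^ k ≤ nu a N σsq j ^ k := by
  have hσ_le : σsq ≤ N * expEigenvalue a j := by
    calc σsq = N * exp (-log (N / σsq)) := by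
          rw [exp_neg, exp_log (div_pos hN hσ)]; field_simp
      _ ≤ N * expEigenvalue a j := by
          unfold expEigenvalue; gcongr
  gcongr
  exact half_le_div_add_of_le hσ hσ_le

theorem tsum_nu_pow_le (hd : 0 < d) (hk : k ≠ 0) (ha : 0 < a) (hN : 0 < N) (hσ : 0 < σsq)
    (hL : d ≤ log (N / σsq)) :
    Summable (fun j : Fin d → ℕ+ => nu a N σsq j ^ k) ∧
      ∑' j : Fin d → ℕ+, nu a N σsq j ^ k ≤ (exp 1 / d) ^ d * (a⁻¹ * log (N / σsq)) ^ d := by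
  set L := log (N / σsq) with hL_def
  have hd' : (0 : ℝ) < d := Nat.cast_pos.mpr hd
  have hL0 : 0 < L := hd'.trans_le hL
  have hc : 0 < d / L * a := by positivity
  have hpoint : ∀ j : Fin d → ℕ+, nu a N σsq j ^ k ≤ exp d * expEigenvalue (d / L * a) j := by
    intro j
    have := nu_pow_le_exp_mul_expEigenvalue (a := a) hk hN hσ (by positivity)
      ((div_le_one hL0).mpr hL) j
    rwa [← hL_def, div_mul_cancel₀ _ hL0.ne'] at this
  have hmaj := (hasSum_expEigenvalue hc d).mul_left (exp d)
  have hsum : Summable (fun j : Fin d → ℕ+ => nu a N σsq j ^ k) :=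
    .of_nonneg_of_le (fun j => pow_nonneg (nu_nonneg hN.le hσ.le j) k) hpoint hmaj.summable
  refine ⟨hsum, ?_⟩
  have hq0 : 0 ≤ exp (-(d / L * a)) / (1 - exp (-(d / L * a))) :=
    div_nonneg (exp_pos _).le (sub_nonneg.mpr (exp_le_one_iff.mpr (by linarith)))
  calc ∑' j, nu a N σsq j ^ k ≤ exp d * (exp (-(d / L * a)) / (1 - exp (-(d / L * a)))) ^ d :=
        hasSum_le hpoint hsum.hasSum hmaj
    _ ≤ exp d * (d / L * a)⁻¹ ^ d := by gcongr; exact exp_neg_div_one_sub_exp_neg_le hc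
    _ = (exp 1 / d) ^ d * (a⁻¹ * L) ^ d := by
        rw [← exp_one_pow, mul_inv, inv_div]
        ring

theorem le_tsum_nu_pow (hd : 0 < d) (ha : 0 < a) (hN : 0 < N) (hσ : 0 < σsq)
    (hJ : d + 1 ≤ a⁻¹ * log (N / σsq)) (hsum : Summable (fun j : Fin d → ℕ+ => nu a N σsq j ^ k)) :
    (1 / 2) ^ k / (d * (d + 1)) ^ d * (a⁻¹ * log (N / σsq)) ^ d ≤
      ∑' j : Fin d → ℕ+, nu a N σsq j ^ k := by
  set J := a⁻¹ * log (N / σsq)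
  have hd' : (0 : ℝ) < d := Nat.cast_pos.mpr hd
  obtain ⟨m, hmJ, hm⟩ := exists_pnat_div_le_and_mul_le hd' hJ
  have hbox : ∀ j : Fin d → ℕ+, (∀ i, j i ≤ m) → (1 / 2 : ℝ) ^ k ≤ nu a N σsq j ^ k := by
    intro j hj
    refine one_half_pow_le_nu_pow hN hσ ?_
    have hsum_le : ∑ i, ((j i : ℕ) : ℝ) ≤ d * m := by
      simpa using Finset.sum_le_sum fun i (_ : i ∈ Finset.univ) =>
        (Nat.cast_le (α := ℝ)).mpr (PNat.coe_le_coe _ _ |>.mpr (hj i))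
    calc a * ∑ i, ((j i : ℕ) : ℝ) ≤ a * J := by gcongr; exact hsum_le.trans hm
      _ = log (N / σsq) := by rw [← mul_assoc, mul_inv_cancel₀ ha.ne', one_mul]
  calc (1 / 2) ^ k / (d * (d + 1)) ^ d * J ^ d = (1 / 2) ^ k * (J / (d * (d + 1))) ^ d := by
        rw [div_pow]; ring
    _ ≤ (1 / 2) ^ k * (m : ℝ) ^ d := by
        gcongr
        exact div_nonneg (by linarith) (by positivity)
    _ ≤ ∑' j, nu a N σsq j ^ k :=
        mul_pow_le_tsum_of_le_on_box (fun j => pow_nonneg (nu_nonneg hN.le hσ.le j) k) hsum m hbox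

end

/-- For exponentially decaying eigenvalues `μ_j = e^{-a ∑ j_i}` and
`ν_j = Nμ_j/(σ² + Nμ_j)`, for each `k ≥ 1`,
`∑_j ν_j^k ≍ (a⁻¹ log(N/σ²))^d` with constants depending only on `d, k`. -/
theorem nu_sum_exponential (d k : ℕ) (hd : 1 ≤ d) (hk : 1 ≤ k) :
    ∃ c₁ > (0:ℝ), ∃ c₂ > (0:ℝ), ∀ a ∈ Set.Ioo (0:ℝ) 1, ∀ N σsq : ℝ, 0 < σsq →
      Real.exp (d + 1) < N / σsq →
      c₁ * (a⁻¹ * Real.log (N / σsq)) ^ d ≤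
        (∑' j : Fin d → ℕ+,
          (N * Real.exp (-(a * ∑ i, ((j i : ℕ) : ℝ))) /
            (σsq + N * Real.exp (-(a * ∑ i, ((j i : ℕ) : ℝ))))) ^ k) ∧
      (∑' j : Fin d → ℕ+,
          (N * Real.exp (-(a * ∑ i, ((j i : ℕ) : ℝ))) /
            (σsq + N * Real.exp (-(a * ∑ i, ((j i : ℕ) : ℝ))))) ^ k)
        ≤ c₂ * (a⁻¹ * Real.log (N / σsq)) ^ d := by
  refine ⟨(1 / 2) ^ k / (d * (d + 1)) ^ d, by positivity, (exp 1 / d) ^ d, by positivity, ?_⟩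
  rintro a ⟨ha0, ha1⟩ N σsq hσ hR
  have hN : 0 < N := by
    have := (exp_pos _).trans hR
    rwa [div_pos_iff_of_pos_right hσ] at this
  have hL : d + 1 < log (N / σsq) := by rwa [lt_log_iff_exp_lt (div_pos hN hσ)]
  have hJ : d + 1 ≤ a⁻¹ * log (N / σsq) :=
    hL.le.trans (le_mul_of_one_le_left (by linarith) (one_le_inv₀ ha0 |>.mpr ha1.le))
  obtain ⟨hsum, hupper⟩ :=
    tsum_nu_pow_le (a := a) hd (Nat.one_le_iff_ne_zero.mp hk) ha0 hN hσ (by linarith)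
  exact ⟨le_tsum_nu_pow hd ha0 hN hσ hJ hsum, hupper⟩
end

section
/- Let (μ_j)_{j∈𝒥} be nonnegative reals indexed by a countable set with ∑_j μ_j < ∞, and suppose |{j : μ_j N ≥ σ²}| ≤ N for reals N ≥ 1 and σ² ≥ c > 0. Then ∑_{j∈𝒥} μ_j − N ∑_{j ∈ 𝓙'} μ_j²/c_j ≤ C σ² ∑_{j∈𝒥} μ_j/(σ² + Nμ_j), where 𝓙' = {j : μ_j N ≥ σ²}, c_j = (N−1)μ_j + σ² + ∑_i μ_i, and C depends only on ∑_i μ_i and c. -/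
/-!
Split the sum over `𝓙'` and its complement and compare termwise with `σ² μ_j / (σ² + N μ_j)`.
On `𝓙'` one has `μ_j − N μ_j² / c_j = μ_j (σ² + S − μ_j) / c_j` and `c_j ≥ σ² + N μ_j` (as
`μ_j ≤ S`), so the term is at most `(σ² + S) μ_j / (σ² + N μ_j) ≤ (1 + S/c) σ² μ_j / (σ² + N μ_j)`.
Off `𝓙'` one has `N μ_j < σ²`, hence `σ² + N μ_j ≤ 2σ²` and `μ_j ≤ 2σ² μ_j / (σ² + N μ_j)`.
So `C = 2 + |S|/c` works.
-/

theorem tsum_sub_tsum_subtype_le_tsum {ι : Type*} {s : Set ι} {a b g : ι → ℝ}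
    (ha : Summable a) (hb : Summable fun j : s => b j) (hg : Summable g)
    (hs : ∀ j ∈ s, a j - b j ≤ g j) (hsc : ∀ j ∉ s, a j ≤ g j) :
    ∑' j, a j - ∑' j : s, b j ≤ ∑' j, g j := by
  have hb' := summable_subtype_iff_indicator.mp hb
  rw [tsum_subtype, ← ha.tsum_sub hb']
  refine Summable.tsum_le_tsum (fun j => ?_) (ha.sub hb') hg
  by_cases hj : j ∈ s
  · simpa [hj] using hs j hj
  · simpa [hj] using hsc j hj

theorem sub_mul_sq_div_le_mul_div {μ N σsq S : ℝ} (hμ : 0 ≤ μ) (hμS : μ ≤ S) (hN : 0 ≤ N)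
    (hσ : 0 < σsq) :
    μ - N * (μ ^ 2 / ((N - 1) * μ + σsq + S)) ≤ (σsq + S) * (μ / (σsq + N * μ)) := by
  have hd : 0 < σsq + N * μ := by positivity
  have hcj : σsq + N * μ ≤ (N - 1) * μ + σsq + S := by linarith
  have hc : 0 < (N - 1) * μ + σsq + S := hd.trans_le hcj
  calc μ - N * (μ ^ 2 / ((N - 1) * μ + σsq + S))
      = μ * (σsq + S - μ) / ((N - 1) * μ + σsq + S) := by
        rw [eq_div_iff hc.ne', sub_mul, mul_assoc N, div_mul_cancel₀ _ hc.ne']; ring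
    _ ≤ μ * (σsq + S) / ((N - 1) * μ + σsq + S) := by gcongr; linarith
    _ ≤ μ * (σsq + S) / (σsq + N * μ) :=
        div_le_div_of_nonneg_left (mul_nonneg hμ (by linarith)) hd hcj
    _ = (σsq + S) * (μ / (σsq + N * μ)) := by ring

theorem le_two_mul_mul_div_of_mul_le {μ N σsq : ℝ} (hμ : 0 ≤ μ) (hN : 0 ≤ N) (hσ : 0 < σsq)
    (hμN : μ * N ≤ σsq) :
    μ ≤ 2 * σsq * (μ / (σsq + N * μ)) := by
  have hd : 0 < σsq + N * μ := by positivity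
  rw [← mul_div_assoc, le_div_iff₀ hd]
  nlinarith

theorem add_le_one_add_div_mul {S c σsq : ℝ} (hS : 0 ≤ S) (hc : 0 < c) (hσ : c ≤ σsq) :
    σsq + S ≤ (1 + S / c) * σsq := by
  have : S ≤ S / c * σsq := by
    rw [div_mul_eq_mul_div, le_div_iff₀ hc]
    exact mul_le_mul_of_nonneg_left hσ hS
  linarith

/-- Learning-curve upper bound, key algebraic step: if `∑ μ_j = S < ∞`,
`|{j : μ_j N ≥ σ²}| ≤ N`, `σ² ≥ c > 0`, then with `𝓙' = {j : μ_j N ≥ σ²}` and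
`c_j = (N-1)μ_j + σ² + S`,
`∑_j μ_j − N ∑_{j∈𝓙'} μ_j²/c_j ≤ C σ² ∑_j μ_j/(σ² + Nμ_j)` where `C` depends
only on `S` and `c`. -/
theorem learning_curve_upper (S c : ℝ) (hc : 0 < c) :
    ∃ C > (0:ℝ), ∀ (ι : Type) (_ : Countable ι) (μ : ι → ℝ) (N σsq : ℝ),
      (∀ j, 0 ≤ μ j) → Summable μ → (∑' j, μ j) = S → 1 ≤ N → c ≤ σsq →
      ({j : ι | σsq ≤ μ j * N}).Finite →
      (({j : ι | σsq ≤ μ j * N}).ncard : ℝ) ≤ N →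
      (∑' j, μ j) - N * (∑' j : {j : ι | σsq ≤ μ j * N},
          (μ j.1) ^ 2 / ((N - 1) * μ j.1 + σsq + S))
        ≤ C * σsq * ∑' j, μ j / (σsq + N * μ j) := by
  refine ⟨2 + |S| / c, by positivity, ?_⟩
  intro ι _ μ N σsq hμ hsum hS hN hσ hfin _
  have hS0 : 0 ≤ S := hS ▸ tsum_nonneg hμ
  have hσ0 : 0 < σsq := hc.trans_le hσ
  have hN0 : 0 ≤ N := zero_le_one.trans hN
  have hμS (j : ι) : μ j ≤ S := hS ▸ hsum.le_tsum j fun i _ => hμ i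
  have hf : Summable fun j => μ j / (σsq + N * μ j) :=
    (hsum.div_const σsq).of_nonneg_of_le (fun j => by have := hμ j; positivity)
      fun j => div_le_div_of_nonneg_left (hμ j) hσ0
        (le_add_of_nonneg_right (mul_nonneg hN0 (hμ j)))
  have hcoef (k : ℝ) (hk : k ≤ 2 + S / c) (j : ι) :
      k * σsq * (μ j / (σsq + N * μ j)) ≤ (2 + S / c) * σsq * (μ j / (σsq + N * μ j)) := by
    have := hμ j
    gcongr
  have hSc : 0 ≤ S / c := div_nonneg hS0 hc.le
  rw [abs_of_nonneg hS0, ← tsum_mul_left, ← tsum_mul_left]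
  have := hfin.to_subtype
  refine tsum_sub_tsum_subtype_le_tsum (b := fun j => N * (μ j ^ 2 / ((N - 1) * μ j + σsq + S)))
    hsum .of_finite (hf.mul_left _) (fun j _ => ?_) fun j hj => ?_
  · calc μ j - N * (μ j ^ 2 / ((N - 1) * μ j + σsq + S))
        ≤ (σsq + S) * (μ j / (σsq + N * μ j)) :=
          sub_mul_sq_div_le_mul_div (hμ j) (hμS j) hN0 hσ0
      _ ≤ (1 + S / c) * σsq * (μ j / (σsq + N * μ j)) := by
          have := hμ j
          gcongr
          exact add_le_one_add_div_mul hS0 hc hσ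
      _ ≤ _ := hcoef _ (by linarith) j
  · exact (le_two_mul_mul_div_of_mul_le (hμ j) hN0 hσ0 (not_le.mp hj).le).trans
      (hcoef 2 (by linarith) j)
end

section
/- Let β ≥ 2 and c_L > 0, and define f_{0,j} = c_L j^{-1/2-β} (log j)^{-1} for integers j ≥ 3 (and 0 for j < 3). Let ν*_j = μ_j n/(1 + μ_j n) with μ_j ≍ j^{-1-2β}. Then ∑_{j} (1 − ν*_j)² f_{0,j}² ≥ c₀ n^{-2β/(1+2β)} (log n)^{-2} for some constant c₀ > 0 and all sufficiently large n. -/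
/-!
Since `1 - μ_j n / (1 + μ_j n) = (1 + μ_j n)⁻¹` and `μ_j n ≤ 1` as soon as `j ≥ C n^{1/(1+2β)}`,
every term of the window `m ≤ j < 2m`, `m ≈ C n^{1/(1+2β)}`, is at least `f_{0,2m}² / 4`,
as `f_0` is decreasing.
The window has `m` terms, so the sum is at least
`m (2m)^{-1-2β} (log 2m)^{-2} / 4 ≳ n^{-2β/(1+2β)} (log n)^{-2}`.
-/

open Real Finset

noncomputable def trueCoeff (cL β x : ℝ) : ℝ := cL * x ^ (-(1/2 : ℝ) - β) * (log x)⁻¹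

lemma one_sub_div_one_add_eq_inv {x : ℝ} (hx : 1 + x ≠ 0) : 1 - x / (1 + x) = (1 + x)⁻¹ := by
  field_simp
  ring

lemma one_sub_div_one_add_sq_le_one {x : ℝ} (hx : 0 ≤ x) : (1 - x / (1 + x)) ^ 2 ≤ 1 := by
  rw [one_sub_div_one_add_eq_inv (by positivity)]
  exact pow_le_one₀ (by positivity) (inv_le_one_of_one_le₀ (by linarith))

lemma quarter_le_one_sub_div_one_add_sq {x : ℝ} (hx₀ : 0 ≤ x) (hx₁ : x ≤ 1) :
    1 / 4 ≤ (1 - x / (1 + x)) ^ 2 := by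
  rw [one_sub_div_one_add_eq_inv (by positivity), show (1 / 4 : ℝ) = (1 / 2) ^ 2 by norm_num]
  gcongr
  rw [one_div]
  exact inv_anti₀ (by positivity) (by linarith)

lemma one_le_log_of_three_le {x : ℝ} (hx : 3 ≤ x) : 1 ≤ log x := by
  rw [le_log_iff_exp_le (by linarith)]
  exact exp_one_lt_three.le.trans hx

lemma trueCoeff_sq (cL β : ℝ) {x : ℝ} (hx : 0 < x) :
    trueCoeff cL β x ^ 2 = cL ^ 2 * (x ^ (1 + 2 * β))⁻¹ * (log x ^ 2)⁻¹ := by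
  have hpow : (x ^ (-(1/2 : ℝ) - β)) ^ 2 = (x ^ (1 + 2 * β))⁻¹ := by
    rw [← rpow_natCast, ← rpow_mul hx.le, ← rpow_neg hx.le]
    congr 1
    push_cast
    ring
  simp only [trueCoeff, mul_pow, hpow, inv_pow]

lemma trueCoeff_nonneg {cL : ℝ} (hcL : 0 ≤ cL) (β : ℝ) {x : ℝ} (hx : 1 ≤ x) :
    0 ≤ trueCoeff cL β x := by
  have := log_nonneg hx
  unfold trueCoeff
  positivity

lemma trueCoeff_sq_le {cL : ℝ} (β : ℝ) {x : ℝ} (hx : 3 ≤ x) :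
    trueCoeff cL β x ^ 2 ≤ cL ^ 2 * (x ^ (1 + 2 * β))⁻¹ := by
  rw [trueCoeff_sq cL β (by linarith)]
  have hlog : (log x ^ 2)⁻¹ ≤ 1 :=
    inv_le_one_of_one_le₀ (one_le_pow₀ (one_le_log_of_three_le hx))
  have : 0 ≤ cL ^ 2 * (x ^ (1 + 2 * β))⁻¹ := by positivity
  nlinarith

lemma trueCoeff_antitoneOn {cL β : ℝ} (hcL : 0 ≤ cL) (hβ : -(1/2) ≤ β) :
    AntitoneOn (trueCoeff cL β) (Set.Ioi 1) := by
  intro x (hx : 1 < x) y (hy : 1 < y) hxy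
  have hpow : y ^ (-(1/2 : ℝ) - β) ≤ x ^ (-(1/2 : ℝ) - β) :=
    rpow_le_rpow_of_nonpos (by linarith) hxy (by linarith)
  have hlog : (log y)⁻¹ ≤ (log x)⁻¹ := inv_anti₀ (log_pos hx) (log_le_log (by linarith) hxy)
  unfold trueCoeff
  have := log_pos hy
  gcongr

lemma summable_bias_terms {cL β : ℝ} (hβ : 0 < β) {μ : ℕ → ℝ} (hμ : ∀ j, 3 ≤ j → 0 ≤ μ j)
    (n : ℕ) : Summable fun j : ℕ =>
      (1 - μ j * n / (1 + μ j * n)) ^ 2 * (if 3 ≤ j then trueCoeff cL β j else 0) ^ 2 := by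
  refine Summable.of_nonneg_of_le (fun j => by positivity) (fun j => ?_)
    ((summable_nat_rpow_inv.mpr (by linarith : 1 < 1 + 2 * β)).mul_left (cL ^ 2))
  split_ifs with hj
  · have hj3 : (3 : ℝ) ≤ j := by exact_mod_cast hj
    calc _ ≤ 1 * trueCoeff cL β j ^ 2 := by
          gcongr
          exact one_sub_div_one_add_sq_le_one (by have := hμ j hj; positivity)
      _ ≤ _ := by rw [one_mul]; exact trueCoeff_sq_le β hj3
  · simp only [ne_eq, OfNat.ofNat_ne_zero, not_false_eq_true, zero_pow, mul_zero]
    positivity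

lemma mul_le_one_of_le_rpow {m C n x B : ℝ} (hm : m ≤ C * x ^ (-B)) (hx : 0 < x) (hn : 0 ≤ n)
    (h : C * n ≤ x ^ B) : m * n ≤ 1 := by
  have hxB : 0 < x ^ B := rpow_pos_of_pos hx B
  calc m * n ≤ C * x ^ (-B) * n := mul_le_mul_of_nonneg_right hm hn
    _ = C * n / x ^ B := by rw [rpow_neg hx.le]; ring
    _ ≤ 1 := (div_le_one hxB).mpr h

lemma quarter_trueCoeff_sq_le_bias_term {cL β C : ℝ} (hcL : 0 ≤ cL) (hβ : 0 ≤ β) (hC : 1 ≤ C)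
    {μ : ℕ → ℝ} {n j : ℕ} (hμ₀ : 0 ≤ μ j) (hμ : μ j ≤ C * (j : ℝ) ^ (-1 - 2 * β))
    (hj : 3 ≤ j) (hnj : C * (n : ℝ) ^ (1 + 2 * β)⁻¹ ≤ j) {M : ℝ} (hjM : j ≤ M) :
    1 / 4 * trueCoeff cL β M ^ 2 ≤
      (1 - μ j * n / (1 + μ j * n)) ^ 2 * (if 3 ≤ j then trueCoeff cL β j else 0) ^ 2 := by
  have hB : 1 ≤ 1 + 2 * β := by linarith
  have hj3 : (3 : ℝ) ≤ j := by exact_mod_cast hj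
  have hCn : C * n ≤ (j : ℝ) ^ (1 + 2 * β) := calc
    C * n ≤ C ^ (1 + 2 * β) * n := by gcongr; exact self_le_rpow_of_one_le hC hB
    _ = (C * (n : ℝ) ^ (1 + 2 * β)⁻¹) ^ (1 + 2 * β) := by
      rw [mul_rpow (by linarith) (by positivity), rpow_inv_rpow (by positivity) (by linarith)]
    _ ≤ _ := by gcongr
  have hx₁ : μ j * n ≤ 1 :=
    mul_le_one_of_le_rpow (by rwa [neg_add']) (by linarith) (Nat.cast_nonneg n) hCn
  have hM1 : (1 : ℝ) ≤ M := by linarith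
  have hcoeff : trueCoeff cL β M ≤ trueCoeff cL β j :=
    trueCoeff_antitoneOn hcL (by linarith) (show (1 : ℝ) < j by linarith)
      (show (1 : ℝ) < M by linarith) hjM
  rw [if_pos hj]
  exact mul_le_mul (quarter_le_one_sub_div_one_add_sq (by positivity) hx₁)
    (pow_le_pow_left₀ (trueCoeff_nonneg hcL β hM1) hcoeff 2) (by positivity) (by positivity)

lemma inv_rpow_mul_rpow_le {K n m M B : ℝ} (hB : 0 < B) (hK : 0 ≤ K) (hn : 0 < n)
    (hm : n ^ B⁻¹ ≤ m) (hM : 0 < M) (hMK : M ≤ K * n ^ B⁻¹) :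
    (K ^ B)⁻¹ * n ^ (B⁻¹ - 1) ≤ m * (M ^ B)⁻¹ := by
  have hMB : M ^ B ≤ K ^ B * n := by
    calc M ^ B ≤ (K * n ^ B⁻¹) ^ B := by gcongr
      _ = K ^ B * n := by rw [mul_rpow hK (by positivity), rpow_inv_rpow hn.le hB.ne']
  calc (K ^ B)⁻¹ * n ^ (B⁻¹ - 1) = n ^ B⁻¹ * (K ^ B * n)⁻¹ := by
        rw [rpow_sub hn, rpow_one, mul_inv]; ring
    _ ≤ m * (M ^ B)⁻¹ := by
        have := (rpow_nonneg hn.le B⁻¹).trans hm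
        gcongr

lemma log_le_of_le_mul_rpow {K n M γ : ℝ} (hK : 1 ≤ K) (hn₀ : 0 < n) (hn : 1 ≤ log n)
    (hγ : γ ≤ 1) (hM : 0 < M) (hMK : M ≤ K * n ^ γ) : log M ≤ (log K + 1) * log n := by
  have hlogK := log_nonneg hK
  calc log M ≤ log (K * n ^ γ) := log_le_log hM hMK
    _ = log K + γ * log n := by rw [log_mul (by positivity) (by positivity), log_rpow hn₀]
    _ ≤ (log K + 1) * log n := by nlinarith

lemma bias_window_lower {cL β K n m M : ℝ} (hβ : 0 ≤ β) (hK : 1 ≤ K) (hn : 1 ≤ log n)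
    (hn₀ : 0 < n) (hm : n ^ (1 + 2 * β)⁻¹ ≤ m) (hM : 1 < M) (hMK : M ≤ K * n ^ (1 + 2 * β)⁻¹) :
    cL ^ 2 / (4 * K ^ (1 + 2 * β) * (log K + 1) ^ 2) * n ^ (-(2 * β) / (1 + 2 * β)) *
        log n ^ (-(2 : ℝ)) ≤ m * (1 / 4 * trueCoeff cL β M ^ 2) := by
  have hexp : -(2 * β) / (1 + 2 * β) = (1 + 2 * β)⁻¹ - 1 := by
    field_simp
    ring
  have hpow := inv_rpow_mul_rpow_le (by linarith) (by linarith) hn₀ hm (by linarith) hMK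
  have hlog :=
    log_le_of_le_mul_rpow hK hn₀ hn (inv_le_one_of_one_le₀ (by linarith)) (by linarith) hMK
  have hlogM := log_pos hM
  have hlogK := log_nonneg hK
  rw [hexp, rpow_neg (by linarith), rpow_two, trueCoeff_sq cL β (by linarith)]
  calc _ = cL ^ 2 / 4 * ((K ^ (1 + 2 * β))⁻¹ * n ^ ((1 + 2 * β)⁻¹ - 1)) *
          (((log K + 1) * log n) ^ 2)⁻¹ := by
        field_simp
    _ ≤ cL ^ 2 / 4 * (m * (M ^ (1 + 2 * β))⁻¹) * (log M ^ 2)⁻¹ := by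
        have := (rpow_nonneg hn₀.le (1 + 2 * β)⁻¹).trans hm
        gcongr
    _ = _ := by ring

lemma exists_nat_window {x : ℝ} (hx : 1 ≤ x) : ∃ m : ℕ, 3 ≤ m ∧ x ≤ m ∧ 2 * (m : ℝ) ≤ 10 * x := by
  refine ⟨⌈x⌉₊ + 3, by omega, ?_, ?_⟩ <;> push_cast
  · linarith [Nat.le_ceil x]
  · linarith [Nat.ceil_lt_add_one (zero_le_one.trans hx)]

/-- Sub-optimality of the naive method, bias lower bound: with
`f_{0,j} = c_L j^{-1/2-β} (log j)^{-1}` for `j ≥ 3`, `μ_j ≍ j^{-1-2β}` and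
`ν*_j = μ_j n/(1+μ_j n)`, one has
`∑_j (1-ν*_j)² f_{0,j}² ≥ c₀ n^{-2β/(1+2β)} (log n)^{-2}` for large `n`. -/
theorem naive_bias_lower (β cL C : ℝ) (hβ : 2 ≤ β) (hcL : 0 < cL) (hC : 1 ≤ C)
    (μ : ℕ → ℝ)
    (hμ : ∀ j : ℕ, 1 ≤ j →
      C⁻¹ * (j : ℝ) ^ (-1 - 2 * β) ≤ μ j ∧ μ j ≤ C * (j : ℝ) ^ (-1 - 2 * β)) :
    ∃ c₀ > (0:ℝ), ∃ n₀ : ℕ, ∀ n : ℕ, n₀ ≤ n →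
      c₀ * (n : ℝ) ^ (-(2 * β) / (1 + 2 * β)) * (Real.log n) ^ (-(2:ℝ)) ≤
        ∑' j : ℕ, (1 - μ j * n / (1 + μ j * n)) ^ 2 *
          (if 3 ≤ j then cL * (j : ℝ) ^ (-(1/2 : ℝ) - β) * (Real.log j)⁻¹ else 0) ^ 2 := by
  have hμ₀ (j : ℕ) (hj : 1 ≤ j) : 0 ≤ μ j :=
    (mul_nonneg (inv_nonneg.mpr (by linarith)) (by positivity)).trans (hμ j hj).1
  have hlog₀ : 0 ≤ log (10 * C) := log_nonneg (by linarith)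
  refine ⟨cL ^ 2 / (4 * (10 * C) ^ (1 + 2 * β) * (log (10 * C) + 1) ^ 2), by positivity, 3,
    fun n hn => ?_⟩
  have hn₃ : (3 : ℝ) ≤ n := by exact_mod_cast hn
  have hnγ : 1 ≤ (n : ℝ) ^ (1 + 2 * β)⁻¹ := one_le_rpow (by linarith) (by positivity)
  obtain ⟨m, hm₃, hxm, hmx⟩ := exists_nat_window (one_le_mul_of_one_le_of_one_le hC hnγ)
  have hterm : ∀ j ∈ Ico m (2 * m), 1 / 4 * trueCoeff cL β (2 * m) ^ 2 ≤
      (1 - μ j * n / (1 + μ j * n)) ^ 2 * (if 3 ≤ j then trueCoeff cL β j else 0) ^ 2 := by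
    intro j hj
    obtain ⟨hmj, hj2m⟩ := mem_Ico.mp hj
    have hmj' : (m : ℝ) ≤ j := by exact_mod_cast hmj
    have hj2m' : (j : ℝ) ≤ 2 * m := by exact_mod_cast hj2m.le
    exact quarter_trueCoeff_sq_le_bias_term hcL.le (by linarith) hC (hμ₀ j (by omega))
      (hμ j (by omega)).2 (hm₃.trans hmj) (hxm.trans hmj') hj2m'
  calc _ ≤ (m : ℝ) * (1 / 4 * trueCoeff cL β (2 * m) ^ 2) := by
        refine bias_window_lower (by linarith) (by linarith) (one_le_log_of_three_le hn₃)
          (by linarith) ((le_mul_of_one_le_left (by positivity) hC).trans hxm)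
          (by norm_cast; omega) (by linarith)
    _ ≤ ∑ j ∈ Ico m (2 * m), _ := by
        simpa [Nat.card_Ico, two_mul] using card_nsmul_le_sum _ _ _ hterm
    _ ≤ _ := (summable_bias_terms (by linarith) (fun j hj => hμ₀ j (by omega)) n).sum_le_tsum _
        (fun j _ => by positivity)
end

section
/- Let W_n be a chi-squared random variable with n degrees of freedom and C₀ > 1. Then for all sufficiently large n, E[W_n · 1{W_n ≥ n^{C₀}}] ≤ e^{-n^{C₀}/3}. -/
/-!
For `x ≥ t = n^{C₀}` and `p = n/2`, the integrand `x · x^{p-1} e^{-x/2} / (2^p Γ(p))` is at most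
`x^p e^{-x/2}`, and `x^p ≤ e^{x/6}/3` as soon as `log 3 + p log x ≤ x/6`. By concavity of `log`
this inequality propagates from `t` to every `x ≥ t` once `12 p ≤ t`, and at `t` it holds for
large `n` because `n log n = o(n^{C₀})`. Hence the integrand is dominated by `e^{-x/3}/3`, whose
integral over `[t, ∞)` is exactly `e^{-t/3}`.
-/

open Real MeasureTheory Set Filter Asymptotics

theorem isLittleO_id_mul_rpow_atTop {f : ℝ → ℝ} {C : ℝ}
    (hf : f =o[atTop] fun x => x ^ (C - 1)) :
    (fun x => x * f x) =o[atTop] fun x => x ^ C := by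
  refine ((isBigO_refl (fun x : ℝ => x) atTop).mul_isLittleO hf).congr' .rfl ?_
  filter_upwards [eventually_gt_atTop 0] with x hx
  rw [rpow_sub_one hx.ne', mul_div_cancel₀ _ hx.ne']

theorem eventually_chiSq_tail_conditions {C : ℝ} (hC : 1 < C) :
    ∀ᶠ x : ℝ in atTop,
      2 ≤ x / 2 ∧ 12 * (x / 2) ≤ x ^ C ∧ log 3 + x / 2 * log (x ^ C) ≤ x ^ C / 6 := by
  have hC' : 0 < C - 1 := by linarith
  have hlin : (fun x : ℝ => x) =o[atTop] fun x => x ^ C := by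
    simpa using isLittleO_id_mul_rpow_atTop (f := fun _ => (1 : ℝ))
      ((isLittleO_one_left_iff ℝ).2 (tendsto_norm_atTop_atTop.comp (tendsto_rpow_atTop hC')))
  have hlog : (fun x : ℝ => log 3 + C / 2 * (x * log x)) =o[atTop] fun x => x ^ C :=
    (isLittleO_const_left.2 (Or.inr (tendsto_norm_atTop_atTop.comp
      (tendsto_rpow_atTop (by linarith))))).add
      ((isLittleO_id_mul_rpow_atTop (isLittleO_log_rpow_atTop hC')).const_mul_left _)
  filter_upwards [hlin.bound (by norm_num : (0 : ℝ) < 1 / 6),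
    hlog.bound (by norm_num : (0 : ℝ) < 1 / 6), eventually_ge_atTop 4] with x hx hxlog hx4
  have hx0 : 0 < x := by linarith
  rw [norm_of_nonneg hx0.le, norm_of_nonneg (rpow_nonneg hx0.le _)] at hx
  rw [norm_of_nonneg (rpow_nonneg hx0.le _)] at hxlog
  refine ⟨by linarith, by linarith, ?_⟩
  rw [log_rpow hx0]
  calc log 3 + x / 2 * (C * log x) = log 3 + C / 2 * (x * log x) := by ring
    _ ≤ ‖log 3 + C / 2 * (x * log x)‖ := le_norm_self _
    _ ≤ x ^ C / 6 := by linarith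

-- `x ↦ x/6 - p log x` is increasing on `[6p, ∞)`; the tangent line of `log` at `t` suffices.
theorem log_three_add_mul_log_le_of_le {p t x : ℝ} (hp : 0 < p) (hpt : 12 * p ≤ t)
    (ht : log 3 + p * log t ≤ t / 6) (htx : t ≤ x) : log 3 + p * log x ≤ x / 6 := by
  have ht0 : 0 < t := by linarith
  have hx0 : 0 < x := by linarith
  have htangent : log x ≤ log t + (x - t) / t := by
    have := log_le_sub_one_of_pos (div_pos hx0 ht0)
    rw [log_div hx0.ne' ht0.ne'] at this
    rw [sub_div, div_self ht0.ne']
    linarith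
  have hslope : p * ((x - t) / t) ≤ (x - t) / 12 := by
    rw [mul_div_assoc', div_le_div_iff₀ ht0 (by norm_num)]
    nlinarith
  nlinarith

theorem rpow_mul_exp_neg_half_le {p x : ℝ} (hx : 0 < x) (h : log 3 + p * log x ≤ x / 6) :
    x ^ p * exp (-x / 2) ≤ exp (-(1 / 3) * x) / 3 := by
  rw [rpow_def_of_pos hx, ← exp_add, ← exp_log (by norm_num : (0 : ℝ) < 3), ← exp_sub,
    exp_log (by norm_num)]
  exact exp_le_exp.2 (by linarith)

theorem one_le_two_rpow_mul_Gamma {p : ℝ} (hp : 2 ≤ p) : 1 ≤ 2 ^ p * Gamma p := by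
  have hGamma : 1 ≤ Gamma p := by
    simpa [Gamma_two] using
      Gamma_strictMonoOn_Ici.monotoneOn (mem_Ici.2 le_rfl) (mem_Ici.2 hp) hp
  nlinarith [one_le_rpow (by norm_num : (1 : ℝ) ≤ 2) (by linarith : 0 ≤ p)]

theorem mul_chiSq_density_le {p x : ℝ} (hp : 2 ≤ p) (hx : 0 < x) :
    x * (x ^ (p - 1) * exp (-x / 2) / (2 ^ p * Gamma p)) ≤ x ^ p * exp (-x / 2) := by
  rw [mul_div_assoc', ← mul_assoc, ← rpow_one_add' hx.le (by linarith), add_sub_cancel]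
  exact div_le_self (by positivity) (one_le_two_rpow_mul_Gamma hp)

/-- Truncated first moment of a chi-squared random variable with `n` degrees of
freedom: for `C₀ > 1` and `n` large enough,
`E[W_n 1{W_n ≥ n^{C₀}}] ≤ e^{-n^{C₀}/3}`. -/
theorem chi_sq_truncated_moment (C₀ : ℝ) (hC₀ : 1 < C₀) :
    ∃ n₀ : ℕ, ∀ n : ℕ, n₀ ≤ n →
      (∫ x in Set.Ici ((n : ℝ) ^ C₀),
          x * (x ^ ((n : ℝ) / 2 - 1) * Real.exp (-x / 2) /
            (2 ^ ((n : ℝ) / 2) * Real.Gamma ((n : ℝ) / 2))))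
        ≤ Real.exp (-(n : ℝ) ^ C₀ / 3) := by
  obtain ⟨n₀, hn₀⟩ := eventually_atTop.1
    (tendsto_natCast_atTop_atTop.eventually (eventually_chiSq_tail_conditions hC₀))
  refine ⟨n₀, fun n hn => ?_⟩
  obtain ⟨hp, hpt, ht⟩ := hn₀ n hn
  set t := (n : ℝ) ^ C₀
  have ht0 : 0 < t := by linarith
  have hbound : ∀ x ∈ Ioi t, x * (x ^ ((n : ℝ) / 2 - 1) * exp (-x / 2) /
      (2 ^ ((n : ℝ) / 2) * Gamma ((n : ℝ) / 2))) ≤ exp (-(1 / 3) * x) / 3 := fun x hx =>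
    (mul_chiSq_density_le hp (ht0.trans hx)).trans (rpow_mul_exp_neg_half_le (ht0.trans hx)
      (log_three_add_mul_log_le_of_le (by linarith) hpt ht hx.le))
  rw [integral_Ici_eq_integral_Ioi]
  calc _ ≤ ∫ x in Ioi t, exp (-(1 / 3) * x) / 3 := by
        refine integral_mono_of_nonneg ?_ ((integrableOn_exp_mul_Ioi (by norm_num) t).div_const 3)
          ((ae_restrict_mem measurableSet_Ioi).mono hbound)
        filter_upwards [ae_restrict_mem measurableSet_Ioi] with x hx
        have hx0 : 0 < x := ht0.trans hx
        positivity
    _ = exp (-t / 3) := by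
        rw [integral_div, integral_exp_mul_Ioi (by norm_num)]
        ring_nf
end
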